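/- arXiv:2510.00928 — 7 statements merged into one kernel-verified Lean document; each statement's English description precedes it below -/
import Mathlib

section
/- For every finite poset P, there is an irreducible inclusion representation of P whose ground set has size at most |P|. Consequently iir(P) ≤ |P|, where iir(P) is the maximum size of the ground set over all irreducible inclusion representations of P. -/
open scoped Classical

/-- `S` is an inclusion representation of the poset `α`. -/
def IsRepr {α β : Type} [PartialOrder α] (S : α → Finset β) : Prop :=
  ∀ x y : α, x ≤ y ↔ S x ⊆ S y

/-- The ground set of a representation. -/
noncomputable def ground {α β : Type} [Fintype α] (S : α → Finset β) : Finset β :=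
  Finset.univ.biUnion S

/-- `S` is a reduction of `T`. -/
def IsReduction {α β γ : Type} [Fintype α] (S : α → Finset β) (T : α → Finset γ) : Prop :=
  (ground S).card ≤ (ground T).card ∧ ∀ x, (S x).card ≤ (T x).card

/-- An inclusion representation is irreducible if it admits no strict reduction. -/
def IrreducibleRepr {α β : Type} [PartialOrder α] [Fintype α] (S : α → Finset β) : Prop :=
  IsRepr S ∧ ∀ T : α → Finset ℕ, IsRepr T → IsReduction T S → IsReduction S T

/-- Maximum ground-set size over irreducible inclusion representations. -/
noncomputable def iir (α : Type) [PartialOrder α] [Fintype α] : ℕ :=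
  sSup {w | ∃ S : α → Finset ℕ, IrreducibleRepr S ∧ (ground S).card = w}

/-- Cube height. -/
noncomputable def chHeight (α : Type) [PartialOrder α] [Fintype α] : ℕ :=
  sInf {h | ∃ S : α → Finset ℕ, IsRepr S ∧ ∀ x, (S x).card ≤ h}

/-- 2-dimension. -/
noncomputable def dim2 (α : Type) [PartialOrder α] [Fintype α] : ℕ :=
  sInf {w | ∃ S : α → Finset ℕ, IsRepr S ∧ (ground S).card = w}

/-- Cube width. -/
noncomputable def cw (α : Type) [PartialOrder α] [Fintype α] : ℕ :=
  sInf {w | ∃ S : α → Finset ℕ, IsRepr S ∧ (ground S).card = w ∧ ∀ x, (S x).card ≤ chHeight α}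

/-- Closed down-set `D_P[x]` as a finset. -/
noncomputable def downSet {α : Type} [PartialOrder α] [Fintype α] (x : α) : Finset α :=
  Finset.univ.filter (· ≤ x)

/-- The canonical inclusion representation. -/
noncomputable def canonical (α : Type) [PartialOrder α] [Fintype α] : α → Finset α :=
  fun x => downSet x

/-- No Block is a Chain Property. -/
def NoBlockChain (α : Type) [PartialOrder α] : Prop :=
  ∀ x : α, ∃ y : α, ¬ x ≤ y ∧ ¬ y ≤ x

/-- Two Down Property. -/
def TwoDown (α : Type) [PartialOrder α] : Prop :=
  ∀ y : α, (∃ a b : α, a ≠ b ∧ a ⋖ y ∧ b ⋖ y) →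
    ∃ z : α, (∀ u : α, u < y → u < z) ∧ ¬ y ≤ z ∧ ¬ z ≤ y

/-- Parallel Pair Property. -/
def ParallelPair (α : Type) [PartialOrder α] : Prop :=
  ∀ x y : α, ¬ x ≤ y → ¬ y ≤ x →
    (∃ y' : α, (∀ u : α, u < x → u < y') ∧ y ≤ y' ∧ ¬ x ≤ y' ∧ ¬ y' ≤ x) ∨
    (∃ x' : α, (∀ u : α, u < y → u < x') ∧ x ≤ x' ∧ ¬ y ≤ x' ∧ ¬ x' ≤ y)

/-- A vertical decomposition of a poset into two non-empty parts. -/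
def IsVerticalDecomp {α : Type} [PartialOrder α] (A B : Set α) : Prop :=
  A.Nonempty ∧ B.Nonempty ∧ (∀ x, x ∈ A ∨ x ∈ B) ∧ ∀ x ∈ A, ∀ y ∈ B, x < y

/-- A block is a chain or a vertical prime. -/
def IsBlock (α : Type) [PartialOrder α] : Prop :=
  (∀ x y : α, x ≤ y ∨ y ≤ x) ∨ ¬ ∃ A B : Set α, IsVerticalDecomp A B

section AuxIIR

variable {α : Type} [PartialOrder α] [Fintype α]

lemma mem_ground_iff {β : Type} {S : α → Finset β} {e : β} :
    e ∈ ground S ↔ ∃ z, e ∈ S z := by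
  simp [ground]

lemma ground_mono {β : Type} {S T : α → Finset β} (h : ∀ z, S z ⊆ T z) :
    ground S ⊆ ground T := by
  intro e he
  obtain ⟨z, hz⟩ := mem_ground_iff.mp he
  exact mem_ground_iff.mpr ⟨z, h z hz⟩

/-- The set of points where `g` is uniquely needed. -/
noncomputable def NgIIR (S : α → Finset ℕ) (g : ℕ) : Finset α :=
  Finset.univ.filter (fun x => ∃ y, S x \ S y = {g})

lemma mem_NgIIR {S : α → Finset ℕ} {g : ℕ} {x : α} :
    x ∈ NgIIR S g ↔ ∃ y, S x \ S y = {g} := by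
  simp [NgIIR]

lemma g_mem_of_NgIIR {S : α → Finset ℕ} {g : ℕ} {x : α} (hx : x ∈ NgIIR S g) :
    g ∈ S x := by
  obtain ⟨y, hy⟩ := mem_NgIIR.mp hx
  have : g ∈ S x \ S y := by rw [hy]; exact Finset.mem_singleton_self g
  exact (Finset.mem_sdiff.mp this).1

lemma step1 {S : α → Finset ℕ} (hS : IrreducibleRepr S) (g : ℕ) :
    ∀ z, g ∈ S z → ∃ x ∈ NgIIR S g, x ≤ z := by
  intro z hz
  by_contra hcon
  push_neg at hcon
  set T : α → Finset ℕ := fun w =>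
    if ∃ x ∈ NgIIR S g, x ≤ w then S w else (S w).erase g with hT
  have hTsub : ∀ w, T w ⊆ S w := by
    intro w
    by_cases hw : ∃ x ∈ NgIIR S g, x ≤ w
    · simp [hT, hw]
    · simp only [hT, hw, if_false]
      exact Finset.erase_subset g (S w)
  have hTpos : ∀ w, (∃ x ∈ NgIIR S g, x ≤ w) → T w = S w := fun w h => if_pos h
  have hTneg : ∀ w, (¬ ∃ x ∈ NgIIR S g, x ≤ w) → T w = (S w).erase g := fun w h => if_neg h
  have hTrepr : IsRepr T := by
    intro a b
    constructor
    · intro hab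
      by_cases ha : ∃ x ∈ NgIIR S g, x ≤ a
      · have hb : ∃ x ∈ NgIIR S g, x ≤ b := by
          obtain ⟨x, hx1, hx2⟩ := ha
          exact ⟨x, hx1, le_trans hx2 hab⟩
        rw [hTpos a ha, hTpos b hb]
        exact (hS.1 a b).mp hab
      · have h2 : (S b).erase g ⊆ T b := by
          by_cases hb : ∃ x ∈ NgIIR S g, x ≤ b
          · rw [hTpos b hb]; exact Finset.erase_subset g (S b)
          · rw [hTneg b hb]
        rw [hTneg a ha]
        exact subset_trans (Finset.erase_subset_erase g ((hS.1 a b).mp hab)) h2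
    · intro hsub
      by_contra hnab
      have hns : ¬ S a ⊆ S b := fun h => hnab ((hS.1 a b).mpr h)
      obtain ⟨d, hda, hdb⟩ := Finset.not_subset.mp hns
      by_cases hex : ∃ e ∈ S a, e ∉ S b ∧ e ≠ g
      · obtain ⟨e, he1, he2, he3⟩ := hex
        have heTa : e ∈ T a := by
          by_cases ha : ∃ x ∈ NgIIR S g, x ≤ a
          · rw [hTpos a ha]; exact he1
          · rw [hTneg a ha]; exact Finset.mem_erase.mpr ⟨he3, he1⟩
        exact he2 (hTsub b (hsub heTa))
      · push_neg at hex
        have hdg : d = g := hex d hda hdb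
        subst hdg
        have hdiff : S a \ S b = {d} := by
          apply Finset.Subset.antisymm
          · intro e he
            rw [Finset.mem_sdiff] at he
            exact Finset.mem_singleton.mpr (hex e he.1 he.2)
          · intro e he
            rw [Finset.mem_singleton] at he
            subst he
            exact Finset.mem_sdiff.mpr ⟨hda, hdb⟩
        have haN : a ∈ NgIIR S d := mem_NgIIR.mpr ⟨b, hdiff⟩
        have hga : d ∈ T a := by
          rw [hTpos a ⟨a, haN, le_refl a⟩]
          exact hda
        exact hdb (hTsub b (hsub hga))
  have hTred : IsReduction T S :=
    ⟨Finset.card_le_card (ground_mono hTsub), fun x => Finset.card_le_card (hTsub x)⟩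
  have hback := hS.2 T hTrepr hTred
  have hzeq : T z = S z := Finset.eq_of_subset_of_card_le (hTsub z) (hback.2 z)
  have hcondz : ¬ ∃ x ∈ NgIIR S g, x ≤ z := by
    rintro ⟨x, hx1, hx2⟩; exact hcon x hx1 hx2
  have : T z = (S z).erase g := hTneg z hcondz
  rw [hzeq] at this
  exact (Finset.notMem_erase g (S z)) (this ▸ hz)

end AuxIIR
section MainIIR

variable {α : Type} [PartialOrder α] [Fintype α]

lemma ground_card_le_of_irreducible {S : α → Finset ℕ} (hS : IrreducibleRepr S) :
    (ground S).card ≤ Fintype.card α := by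
  classical
  set G := ground S with hG
  set NN : Finset ℕ → Finset α := fun W => W.biUnion (NgIIR S) with hNN
  obtain ⟨W, hWmem, hWmax⟩ := Finset.exists_max_image G.powerset
    (fun W => (W.card : ℤ) - ((NN W).card : ℤ)) ⟨∅, Finset.empty_mem_powerset G⟩
  have hWsub : W ⊆ G := Finset.mem_powerset.mp hWmem
  by_cases hcase : (W.card : ℤ) - ((NN W).card : ℤ) ≤ 0
  · have hGle := le_trans (hWmax G (Finset.mem_powerset_self G)) hcase
    have h1 : G.card ≤ (NN G).card := by
      have := sub_nonpos.mp hGle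
      exact_mod_cast this
    exact le_trans h1 (Finset.card_le_univ (NN G))
  · exfalso
    push_neg at hcase
    have hdef : (NN W).card < W.card := by exact_mod_cast sub_pos.mp hcase
    -- fresh labels
    set M : ℕ := (G.sup id) + 1 with hM
    set h : α → ℕ := fun x => M + ((Fintype.equivFin α) x : ℕ) with hh
    have hinj : Function.Injective h := by
      intro a b hab
      apply (Fintype.equivFin α).injective
      apply Fin.ext
      simpa [hh] using hab
    have hgbig : ∀ e ∈ G, e < M := by
      intro e he
      have : e ≤ G.sup id := Finset.le_sup (f := id) he
      omega
    have hfresh : ∀ x z, h x ∉ S z := by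
      intro x z hx
      have h1 : h x < M := hgbig _ (mem_ground_iff.mpr ⟨z, hx⟩)
      have h2 : M ≤ h x := Nat.le_add_right _ _
      omega
    set T : α → Finset ℕ :=
      fun z => (S z \ W) ∪ ((NN W).filter (· ≤ z)).image h with hT
    -- membership characterizations
    have hmemT : ∀ e z, e ∈ T z ↔
        (e ∈ S z ∧ e ∉ W) ∨ ∃ x ∈ NN W, x ≤ z ∧ h x = e := by
      intro e z
      simp [hT, Finset.mem_union, Finset.mem_sdiff, Finset.mem_image, Finset.mem_filter,
        and_assoc]
    -- T is a representation
    have hTrepr : IsRepr T := by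
      intro z w
      constructor
      · intro hzw
        intro e he
        rcases (hmemT e z).mp he with ⟨h1, h2⟩ | ⟨x, hx1, hx2, hx3⟩
        · exact (hmemT e w).mpr (Or.inl ⟨(hS.1 z w).mp hzw h1, h2⟩)
        · exact (hmemT e w).mpr (Or.inr ⟨x, hx1, le_trans hx2 hzw, hx3⟩)
      · intro hsub
        by_contra hne
        have hns : ¬ S z ⊆ S w := fun hc => hne ((hS.1 z w).mpr hc)
        obtain ⟨d, hdz, hdw⟩ := Finset.not_subset.mp hns
        by_cases hdW : d ∈ W
        · obtain ⟨x, hxN, hxz⟩ := step1 hS d z hdz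
          have hxNN : x ∈ NN W := Finset.mem_biUnion.mpr ⟨d, hdW, hxN⟩
          have hhx : h x ∈ T z := (hmemT _ z).mpr (Or.inr ⟨x, hxNN, hxz, rfl⟩)
          rcases (hmemT _ w).mp (hsub hhx) with ⟨h1, _⟩ | ⟨x', _, hx'2, hx'3⟩
          · exact hfresh x w h1
          · have hxx : x' = x := hinj hx'3
            rw [hxx] at hx'2
            exact hdw ((hS.1 x w).mp hx'2 (g_mem_of_NgIIR hxN))
        · have hdT : d ∈ T z := (hmemT _ z).mpr (Or.inl ⟨hdz, hdW⟩)
          rcases (hmemT _ w).mp (hsub hdT) with ⟨h1, _⟩ | ⟨x, _, _, hx3⟩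
          · exact hdw h1
          · have h1 : d < M := hgbig d (mem_ground_iff.mpr ⟨z, hdz⟩)
            have h2 : M ≤ h x := Nat.le_add_right _ _
            omega
    -- key counting fact from maximality
    have hkey : ∀ z, ((NN W).filter (· ≤ z)).card ≤ (S z ∩ W).card := by
      intro z
      set Y := (NN W).filter (· ≤ z) with hY
      set Γ : Finset ℕ := W.filter (fun d => ∃ x ∈ NgIIR S d, x ∈ Y) with hΓ
      have hΓsub : Γ ⊆ S z ∩ W := by
        intro d hd
        obtain ⟨hdW, x, hx1, hx2⟩ := Finset.mem_filter.mp hd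
        have hxz : x ≤ z := (Finset.mem_filter.mp hx2).2
        exact Finset.mem_inter.mpr ⟨(hS.1 x z).mp hxz (g_mem_of_NgIIR hx1), hdW⟩
      have hYΓ : Y.card ≤ Γ.card := by
        by_contra hlt
        push_neg at hlt
        set V := W \ Γ with hV
        have hVmem : V ∈ G.powerset :=
          Finset.mem_powerset.mpr (le_trans (Finset.sdiff_subset) hWsub)
        have hNNV : NN V ⊆ NN W \ Y := by
          intro x hx
          obtain ⟨d, hdV, hxd⟩ := Finset.mem_biUnion.mp hx
          obtain ⟨hdW, hdΓ⟩ := Finset.mem_sdiff.mp hdV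
          refine Finset.mem_sdiff.mpr ⟨Finset.mem_biUnion.mpr ⟨d, hdW, hxd⟩, ?_⟩
          intro hxY
          exact hdΓ (Finset.mem_filter.mpr ⟨hdW, ⟨x, hxd, hxY⟩⟩)
        have hc1 : (NN V).card ≤ (NN W \ Y).card := Finset.card_le_card hNNV
        have hc2 : (NN W \ Y).card + Y.card = (NN W).card :=
          Finset.card_sdiff_add_card_eq_card (Finset.filter_subset _ _)
        have hc3 : (W \ Γ).card + Γ.card = W.card :=
          Finset.card_sdiff_add_card_eq_card (Finset.filter_subset _ _)
        have hmax := hWmax V hVmem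
        have hVcard : V.card = W.card - Γ.card := by
          rw [hV]; omega
        have hΓW : Γ.card ≤ W.card := Finset.card_le_card (Finset.filter_subset _ _)
        have hYNN : Y.card ≤ (NN W).card := Finset.card_le_card (Finset.filter_subset _ _)
        rw [hVcard] at hmax
        have : ((W.card - Γ.card : ℕ) : ℤ) = (W.card : ℤ) - (Γ.card : ℤ) := by
          omega
        rw [this] at hmax
        have hNNVZ : ((NN V).card : ℤ) ≤ ((NN W).card : ℤ) - (Y.card : ℤ) := by omega
        omega
      exact le_trans hYΓ (Finset.card_le_card hΓsub)
    -- T is a reduction of S, pointwise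
    have hpt : ∀ z, (T z).card ≤ (S z).card := by
      intro z
      have h1 : (T z).card ≤ (S z \ W).card + (((NN W).filter (· ≤ z)).image h).card :=
        Finset.card_union_le _ _
      have h2 : (((NN W).filter (· ≤ z)).image h).card ≤ ((NN W).filter (· ≤ z)).card :=
        Finset.card_image_le
      have h3 : (S z \ W).card + (S z ∩ W).card = (S z).card := by
        rw [← Finset.card_union_of_disjoint (Finset.disjoint_sdiff_inter (S z) W),
          Finset.sdiff_union_inter]
      have h4 := hkey z
      omega
    -- ground of T is strictly smaller
    have hgr : (ground T).card < G.card := by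
      have hsub2 : ground T ⊆ (G \ W) ∪ (NN W).image h := by
        intro e he
        obtain ⟨z, hz⟩ := mem_ground_iff.mp he
        rcases (hmemT e z).mp hz with ⟨h1, h2⟩ | ⟨x, hx1, _, hx3⟩
        · exact Finset.mem_union_left _
            (Finset.mem_sdiff.mpr ⟨mem_ground_iff.mpr ⟨z, h1⟩, h2⟩)
        · exact Finset.mem_union_right _ (Finset.mem_image.mpr ⟨x, hx1, hx3⟩)
      have hc1 : (ground T).card ≤ (G \ W).card + ((NN W).image h).card :=
        le_trans (Finset.card_le_card hsub2) (Finset.card_union_le _ _)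
      have hc2 : ((NN W).image h).card ≤ (NN W).card := Finset.card_image_le
      have hc3 : (G \ W).card + W.card = G.card :=
        Finset.card_sdiff_add_card_eq_card hWsub
      omega
    have hTred : IsReduction T S := ⟨le_of_lt hgr, hpt⟩
    have hback := hS.2 T hTrepr hTred
    have hle := hback.1
    rw [← hG] at hle
    omega

end MainIIR
section ExistIIR

variable {α : Type} [PartialOrder α] [Fintype α]

lemma exists_irreducible_repr (α : Type) [PartialOrder α] [Fintype α] :
    ∃ S : α → Finset ℕ, IrreducibleRepr S := by
  classical
  set e : α ↪ ℕ := (Fintype.equivFin α).toEmbedding.trans Fin.valEmbedding with he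
  set S₀ : α → Finset ℕ := fun x => (downSet x).map e with hS₀def
  have hS₀ : IsRepr S₀ := by
    intro x y
    constructor
    · intro hxy
      apply Finset.map_subset_map.mpr
      intro u hu
      simp only [downSet, Finset.mem_filter, Finset.mem_univ, true_and] at hu ⊢
      exact le_trans hu hxy
    · intro hsub
      have h1 : downSet x ⊆ downSet y := Finset.map_subset_map.mp hsub
      have h2 : x ∈ downSet y :=
        h1 (Finset.mem_filter.mpr ⟨Finset.mem_univ x, le_refl x⟩)
      exact (Finset.mem_filter.mp h2).2
  set m : (α → Finset ℕ) → ℕ := fun T => (ground T).card + ∑ x, (T x).card with hm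
  have hne : {v | ∃ T : α → Finset ℕ, IsRepr T ∧ m T = v}.Nonempty := ⟨m S₀, S₀, hS₀, rfl⟩
  obtain ⟨T, hTrepr, hTm⟩ := Nat.sInf_mem hne
  refine ⟨T, hTrepr, ?_⟩
  intro T' hT'repr hred
  have hsum : ∑ x, (T' x).card ≤ ∑ x, (T x).card :=
    Finset.sum_le_sum fun x _ => hred.2 x
  have hm1 : m T' ≤ m T := add_le_add hred.1 hsum
  have hm2 : m T ≤ m T' := by
    rw [hTm]
    exact Nat.sInf_le ⟨T', hT'repr, rfl⟩
  have hgr : (ground T).card ≤ (ground T').card := by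
    have := hred.1
    simp only [hm] at hm1 hm2
    omega
  have hsumeq : ∑ x, (T' x).card = ∑ x, (T x).card := by
    have := hred.1
    simp only [hm] at hm1 hm2
    omega
  refine ⟨hgr, fun x => ?_⟩
  have := (Finset.sum_eq_sum_iff_of_le (fun i _ => hred.2 i)).mp hsumeq x (Finset.mem_univ x)
  omega

end ExistIIR


/-- every finite poset has an irreducible inclusion representation with
ground set of size at most `|P|`; consequently `iir P ≤ |P|`. -/
theorem iir_le_card (α : Type) [PartialOrder α] [Fintype α] [Nonempty α] :
    (∃ S : α → Finset ℕ, IrreducibleRepr S ∧ (ground S).card ≤ Fintype.card α) ∧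
      iir α ≤ Fintype.card α := by
  obtain ⟨S, hS⟩ := exists_irreducible_repr α
  refine ⟨⟨S, hS, ground_card_le_of_irreducible hS⟩, ?_⟩
  unfold iir
  have hmem : (ground S).card ∈
      {w | ∃ S : α → Finset ℕ, IrreducibleRepr S ∧ (ground S).card = w} := ⟨S, hS, rfl⟩
  apply csSup_le ⟨(ground S).card, hmem⟩
  rintro w ⟨S', hS', rfl⟩
  exact ground_card_le_of_irreducible hS'
end

section
/- For every finite poset P, the cube width of P is at most |P|, i.e., cw(P) ≤ |P|. -/
open scoped Classical

section Core

variable {α : Type} [PartialOrder α] [Fintype α]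

/-- upward closed finset -/
def IsUp (U : Finset α) : Prop := ∀ ⦃a b : α⦄, a ∈ U → a ≤ b → b ∈ U

/-- separating family -/
def Seps (F : Finset (Finset α)) : Prop :=
  ∀ x y : α, ¬ x ≤ y → ∃ U ∈ F, x ∈ U ∧ y ∉ U

noncomputable def degF (F : Finset (Finset α)) (x : α) : ℕ :=
  (F.filter (fun U => x ∈ U)).card

noncomputable def MinS (U : Finset α) : Finset α :=
  U.filter (fun m => ∀ z ∈ U, ¬ z < m)

noncomputable def MM (G : Finset (Finset α)) : Finset α := G.biUnion MinS

noncomputable def UpS (m : α) : Finset α := Finset.univ.filter (fun z => m ≤ z)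

lemma mem_UpS {m z : α} : z ∈ UpS m ↔ m ≤ z := by
  simp [UpS]

lemma isUp_UpS (m : α) : IsUp (UpS m) := by
  intro a b ha hab
  rw [mem_UpS] at *
  exact ha.trans hab

lemma exists_minS_le {U : Finset α} {x : α} (hx : x ∈ U) :
    ∃ m ∈ MinS U, m ≤ x := by
  obtain ⟨m, hm, hmin⟩ := Finset.exists_minimal (s := U.filter (fun z => z ≤ x))
    ⟨x, by simp [hx]⟩
  simp only [Finset.mem_filter] at hm
  refine ⟨m, ?_, hm.2⟩
  rw [MinS, Finset.mem_filter]
  refine ⟨hm.1, fun z hz hlt => ?_⟩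
  exact hlt.not_ge (hmin (by simp [hz, le_trans hlt.le hm.2]) hlt.le)

lemma core_lemma : ∀ (k : ℕ) (F : Finset (Finset α)), F.card ≤ k →
    (∀ U ∈ F, IsUp U) → Seps F →
    ∃ V : Finset (Finset α), (∀ U ∈ V, IsUp U) ∧ Seps V ∧
      V.card ≤ Fintype.card α ∧ ∀ x, degF V x ≤ degF F x := by
  intro k
  induction k using Nat.strong_induction_on with
  | _ k IH =>
    intro F hFk hFup hFsep
    by_cases hsmall : F.card ≤ Fintype.card α
    · exact ⟨F, hFup, hFsep, hsmall, fun x => le_rfl⟩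
    push_neg at hsmall
    -- pick minimal violating G ⊆ F with |MM G| < |G|
    have hFviol : F ∈ (F.powerset.filter (fun G => (MM G).card < G.card)) := by
      refine Finset.mem_filter.mpr ⟨Finset.mem_powerset.mpr (Finset.Subset.refl F), ?_⟩
      calc (MM F).card ≤ Fintype.card α := Finset.card_le_univ _
      _ < F.card := hsmall
    obtain ⟨G, hGmem, hGmin⟩ := Finset.exists_min_image
      (F.powerset.filter (fun G => (MM G).card < G.card)) Finset.card ⟨F, hFviol⟩
    rw [Finset.mem_filter, Finset.mem_powerset] at hGmem
    obtain ⟨hGF, hGviol⟩ := hGmem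
    -- Hall on transpose: elements of MM G vs sets of G
    set t : {m // m ∈ MM G} → Finset (Finset α) :=
      (fun m => G.filter (fun U => m.1 ∈ MinS U)) with ht
    have hall : ∀ s : Finset {m // m ∈ MM G}, s.card ≤ (s.biUnion t).card := by
      intro s
      by_contra hlt
      push_neg at hlt
      set T := s.biUnion t with hT
      have hTG : T ⊆ G := by
        intro U hU
        rw [hT, Finset.mem_biUnion] at hU
        obtain ⟨m, _, hU⟩ := hU
        exact (Finset.mem_filter.mp hU).1
      set s' : Finset α := s.image Subtype.val with hs'
      have hs'card : s'.card = s.card := Finset.card_image_of_injective _ Subtype.val_injective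
      have hs'sub : s' ⊆ MM G := by
        intro m hm
        rw [hs', Finset.mem_image] at hm
        obtain ⟨m', _, rfl⟩ := hm
        exact m'.2
      set G' := G \ T with hG'
      have hMG' : MM G' ⊆ MM G \ s' := by
        intro m hm
        rw [MM, Finset.mem_biUnion] at hm
        obtain ⟨U, hUG', hmU⟩ := hm
        rw [hG', Finset.mem_sdiff] at hUG'
        rw [Finset.mem_sdiff]
        constructor
        · exact Finset.mem_biUnion.mpr ⟨U, hUG'.1, hmU⟩
        · intro hms'
          rw [hs', Finset.mem_image] at hms'
          obtain ⟨m', hm's, hval⟩ := hms'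
          apply hUG'.2
          rw [hT, Finset.mem_biUnion]
          exact ⟨m', hm's, by rw [ht]; exact Finset.mem_filter.mpr ⟨hUG'.1, by rw [hval]; exact hmU⟩⟩
      have h1 : (MM G').card ≤ (MM G).card - s.card := by
        calc (MM G').card ≤ (MM G \ s').card := Finset.card_le_card hMG'
        _ = (MM G).card - s'.card := Finset.card_sdiff_of_subset hs'sub
        _ = (MM G).card - s.card := by rw [hs'card]
      have h2 : G'.card = G.card - T.card := Finset.card_sdiff_of_subset hTG
      have hsne : s.Nonempty := by
        rw [← Finset.card_pos]; omega
      have hTne : T.Nonempty := by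
        obtain ⟨m, hms⟩ := hsne
        have := m.2
        simp only [MM, Finset.mem_biUnion] at this
        obtain ⟨U, hUG, hmU⟩ := this
        exact ⟨U, Finset.mem_biUnion.mpr ⟨m, hms, by rw [ht]; exact Finset.mem_filter.mpr ⟨hUG, hmU⟩⟩⟩
      have hTcardpos : 0 < T.card := Finset.card_pos.mpr hTne
      have hTcardle : T.card ≤ G.card := Finset.card_le_card hTG
      have h6 : s'.card ≤ (MM G).card := Finset.card_le_card hs'sub
      have h7 : T.card < s.card := hlt
      have hG'viol : (MM G').card < G'.card := by omega
      have : G.card ≤ G'.card := by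
        apply hGmin
        rw [Finset.mem_filter, Finset.mem_powerset]
        exact ⟨hG'.le.trans (Finset.sdiff_subset.trans hGF) , hG'viol⟩
      omega
    obtain ⟨f, hfinj, hft⟩ := (Finset.all_card_le_biUnion_card_iff_exists_injective t).mp hall
    -- the new family
    set V : Finset (Finset α) := (F \ G) ∪ (MM G).image UpS with hV
    have hVup : ∀ U ∈ V, IsUp U := by
      intro U hU
      rw [hV, Finset.mem_union] at hU
      rcases hU with hU | hU
      · exact hFup U (Finset.mem_sdiff.mp hU).1
      · obtain ⟨m, _, rfl⟩ := Finset.mem_image.mp hU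
        exact isUp_UpS m
    have hVsep : Seps V := by
      intro x y hxy
      obtain ⟨U, hUF, hxU, hyU⟩ := hFsep x y hxy
      by_cases hUG : U ∈ G
      · obtain ⟨m, hmMin, hmx⟩ := exists_minS_le hxU
        have hmMM : m ∈ MM G := Finset.mem_biUnion.mpr ⟨U, hUG, hmMin⟩
        refine ⟨UpS m, ?_, mem_UpS.mpr hmx, ?_⟩
        · rw [hV, Finset.mem_union]
          exact Or.inr (Finset.mem_image.mpr ⟨m, hmMM, rfl⟩)
        · intro hy
          rw [mem_UpS] at hy
          have hmU : m ∈ U := (Finset.filter_subset _ _) hmMin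
          exact hyU (hFup U hUF hmU hy)
      · exact ⟨U, by rw [hV, Finset.mem_union]; exact Or.inl (Finset.mem_sdiff.mpr ⟨hUF, hUG⟩),
          hxU, hyU⟩
    have hMMG : (MM G).card < G.card := hGviol
    have hGcard : G.card ≤ F.card := Finset.card_le_card hGF
    have hVcard : V.card < F.card := by
      have h3 : V.card ≤ (F \ G).card + ((MM G).image UpS).card := Finset.card_union_le _ _
      have h4 : ((MM G).image UpS).card ≤ (MM G).card := Finset.card_image_le
      have h5 : (F \ G).card = F.card - G.card := Finset.card_sdiff_of_subset hGF
      omega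
    -- degree bound
    have hVdeg : ∀ x, degF V x ≤ degF F x := by
      intro x
      have hsplit : degF F x = degF (F \ G) x + degF G x := by
        rw [degF, degF, degF]
        rw [← Finset.card_union_of_disjoint]
        · congr 1
          rw [← Finset.filter_union]
          congr 1
          exact (Finset.sdiff_union_of_subset hGF).symm
        · exact Finset.disjoint_filter_filter (Finset.sdiff_disjoint)
      have hb1 : degF V x ≤ degF (F \ G) x + (((MM G).image UpS).filter (fun U => x ∈ U)).card := by
        rw [degF, hV, Finset.filter_union]
        exact (Finset.card_union_le _ _).trans (by rw [degF])
      have hb2 : (((MM G).image UpS).filter (fun U => x ∈ U)).card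
          ≤ ((MM G).filter (fun m => m ≤ x)).card := by
        rw [Finset.filter_image]
        refine (Finset.card_image_le).trans ?_
        apply le_of_eq
        congr 1
        ext m
        simp [mem_UpS]
      have hb3 : ((MM G).filter (fun m => m ≤ x)).card ≤ degF G x := by
        rw [degF]
        refine Finset.card_le_card_of_injOn
          (fun m => if h : m ∈ MM G then f ⟨m, h⟩ else ∅) ?_ ?_
        · intro m hm
          rw [Finset.mem_coe, Finset.mem_filter] at hm
          obtain ⟨hmMM, hmx⟩ := hm
          dsimp only
          rw [dif_pos hmMM]
          have hf := hft ⟨m, hmMM⟩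
          rw [ht, Finset.mem_filter] at hf
          rw [Finset.mem_coe, Finset.mem_filter]
          refine ⟨hf.1, ?_⟩
          have hmem : m ∈ f ⟨m, hmMM⟩ := (Finset.filter_subset _ _) hf.2
          exact hFup _ (hGF hf.1) hmem hmx
        · intro m1 hm1 m2 hm2 heq
          simp only [Finset.coe_filter, Set.mem_setOf_eq] at hm1 hm2
          dsimp only at heq
          rw [dif_pos hm1.1, dif_pos hm2.1] at heq
          have := hfinj heq
          exact congrArg Subtype.val this
      omega
    obtain ⟨W, hWup, hWsep, hWcard, hWdeg⟩ := IH V.card (by omega) V le_rfl hVup hVsep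
    exact ⟨W, hWup, hWsep, hWcard, fun x => (hWdeg x).trans (hVdeg x)⟩

end Core

section Main

variable {α : Type} [PartialOrder α] [Fintype α]

-- the definitions from the problem file are assumed above; here re-stated for testing
noncomputable def eα (α : Type) [Fintype α] : α ↪ ℕ :=
  (Fintype.equivFin α).toEmbedding.trans (Fin.valEmbedding)

lemma downSet_subset_iff {x y : α} : downSet x ⊆ downSet y ↔ x ≤ y := by
  constructor
  · intro h
    have hx : x ∈ downSet x := by simp [downSet]
    have := h hx
    simpa [downSet] using this
  · intro h z hz
    simp only [downSet, Finset.mem_filter, Finset.mem_univ, true_and] at *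
    exact hz.trans h

lemma chHeight_set_nonempty :
    {h | ∃ S : α → Finset ℕ, IsRepr S ∧ ∀ x, (S x).card ≤ h}.Nonempty := by
  refine ⟨Fintype.card α, fun x => (downSet x).image (eα α), ?_, ?_⟩
  · intro x y
    rw [Finset.image_subset_image_iff (eα α).injective]
    exact downSet_subset_iff.symm
  · intro x
    exact (Finset.card_image_le).trans (Finset.card_le_univ _)

/-- `cw P ≤ |P|` for every finite poset `P`. -/
theorem cw_le_card (α : Type) [PartialOrder α] [Fintype α] [Nonempty α] :
    cw α ≤ Fintype.card α := by
  -- a representation achieving chHeight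
  have hmem := Nat.sInf_mem (chHeight_set_nonempty (α := α))
  obtain ⟨T, hTrepr, hTh⟩ := hmem
  -- trace family
  set trace : ℕ → Finset α := fun g => Finset.univ.filter (fun x => g ∈ T x) with htrace
  set F : Finset (Finset α) := (ground T).image trace with hF
  have hFup : ∀ U ∈ F, IsUp U := by
    intro U hU
    obtain ⟨g, _, rfl⟩ := Finset.mem_image.mp hU
    intro a b ha hab
    simp only [htrace, Finset.mem_filter, Finset.mem_univ, true_and] at *
    exact ((hTrepr a b).mp hab) ha
  have hFsep : Seps F := by
    intro x y hxy
    have : ¬ T x ⊆ T y := fun hsub => hxy ((hTrepr x y).mpr hsub)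
    obtain ⟨g, hgx, hgy⟩ := Finset.not_subset.mp this
    refine ⟨trace g, ?_, ?_, ?_⟩
    · refine Finset.mem_image.mpr ⟨g, ?_, rfl⟩
      simp only [ground, Finset.mem_biUnion]
      exact ⟨x, Finset.mem_univ x, hgx⟩
    · simp [htrace, hgx]
    · simp [htrace, hgy]
  have hFdeg : ∀ x, degF F x ≤ (T x).card := by
    intro x
    rw [degF]
    set pick : Finset α → ℕ := fun U =>
      if h : ∃ g, g ∈ ground T ∧ trace g = U then h.choose else 0 with hpick
    refine Finset.card_le_card_of_injOn pick ?_ ?_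
    · intro U hU
      rw [Finset.mem_coe, Finset.mem_filter] at hU
      obtain ⟨hUF, hxU⟩ := hU
      obtain ⟨g, hg, hgU⟩ := Finset.mem_image.mp hUF
      have hex : ∃ g, g ∈ ground T ∧ trace g = U := ⟨g, hg, hgU⟩
      have hspec := hex.choose_spec
      simp only [hpick]
      rw [dif_pos hex]
      have : x ∈ trace hex.choose := by rw [hspec.2]; exact hxU
      simpa [htrace] using this
    · intro U1 hU1 U2 hU2 heq
      simp only [Finset.coe_filter, Set.mem_setOf_eq] at hU1 hU2
      obtain ⟨g1, hg1, hgU1⟩ := Finset.mem_image.mp hU1.1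
      obtain ⟨g2, hg2, hgU2⟩ := Finset.mem_image.mp hU2.1
      have hex1 : ∃ g, g ∈ ground T ∧ trace g = U1 := ⟨g1, hg1, hgU1⟩
      have hex2 : ∃ g, g ∈ ground T ∧ trace g = U2 := ⟨g2, hg2, hgU2⟩
      simp only [hpick] at heq
      rw [dif_pos hex1, dif_pos hex2] at heq
      calc U1 = trace hex1.choose := hex1.choose_spec.2.symm
      _ = trace hex2.choose := by rw [heq]
      _ = U2 := hex2.choose_spec.2
  -- reduce the family
  obtain ⟨V, hVup, hVsep, hVcard, hVdeg⟩ :=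
    core_lemma F.card F le_rfl hFup hFsep
  -- encode
  set eF : Finset α ↪ ℕ := (Fintype.equivFin (Finset α)).toEmbedding.trans Fin.valEmbedding with heF
  set S : α → Finset ℕ := fun x => (V.filter (fun U => x ∈ U)).image eF with hS
  have hSrepr : IsRepr S := by
    intro x y
    constructor
    · intro hxy
      apply Finset.image_subset_image
      intro U hU
      rw [Finset.mem_filter] at *
      exact ⟨hU.1, hVup U hU.1 hU.2 hxy⟩
    · intro hsub
      by_contra hxy
      obtain ⟨U, hUV, hxU, hyU⟩ := hVsep x y hxy
      have : eF U ∈ S y := hsub (by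
        rw [hS]
        exact Finset.mem_image.mpr ⟨U, Finset.mem_filter.mpr ⟨hUV, hxU⟩, rfl⟩)
      rw [hS] at this
      obtain ⟨U', hU', heq⟩ := Finset.mem_image.mp this
      have : U' = U := eF.injective heq
      subst this
      exact hyU (Finset.mem_filter.mp hU').2
  have hSheight : ∀ x, (S x).card ≤ chHeight α := by
    intro x
    calc (S x).card ≤ (V.filter (fun U => x ∈ U)).card := Finset.card_image_le
    _ = degF V x := rfl
    _ ≤ degF F x := hVdeg x
    _ ≤ (T x).card := hFdeg x
    _ ≤ chHeight α := hTh x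
  have hground : (ground S).card ≤ Fintype.card α := by
    have hsub : ground S ⊆ V.image eF := by
      intro g hg
      simp only [ground, Finset.mem_biUnion] at hg
      obtain ⟨x, _, hgx⟩ := hg
      rw [hS] at hgx
      obtain ⟨U, hU, rfl⟩ := Finset.mem_image.mp hgx
      exact Finset.mem_image.mpr ⟨U, (Finset.mem_filter.mp hU).1, rfl⟩
    calc (ground S).card ≤ (V.image eF).card := Finset.card_le_card hsub
    _ ≤ V.card := Finset.card_image_le
    _ ≤ Fintype.card α := hVcard
  have : (ground S).card ∈ {w | ∃ S : α → Finset ℕ, IsRepr S ∧ (ground S).card = w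
      ∧ ∀ x, (S x).card ≤ chHeight α} := ⟨S, hSrepr, rfl, hSheight⟩
  exact (Nat.sInf_le this).trans hground

end Main
end

section
/- Let P be a finite poset, S = (S_x : x ∈ P) an inclusion representation of P, and y ∈ P. Let Q = P − D_P[y], and let Q' be the poset on the ground set {S_x − S_y : x ∈ Q} ordered by inclusion, with ε ∈ {0,1} equal to 1 iff Q' has a unique minimal element. Then there exists an inclusion representation S' = (S'_x : x ∈ P) of P with |S'_x| ≤ |S_x| for all x ∈ P and |⋃S'| ≤ iir(Q') + ε + |S_y|. -/
open scoped Classical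

section Aux

set_option linter.unusedSectionVars false

variable {γ : Type} [PartialOrder γ] [Fintype γ]

lemma mem_ground_iff_s3 {S : γ → Finset ℕ} {n : ℕ} :
    n ∈ ground S ↔ ∃ x, n ∈ S x := by
  simp [ground]

lemma mem_ground' {S : γ → Finset ℕ} {x : γ} {n : ℕ} (hn : n ∈ S x) : n ∈ ground S :=
  mem_ground_iff_s3.2 ⟨x, hn⟩

lemma ground_subset {S : γ → Finset ℕ} {F : Finset ℕ} (h : ∀ x, S x ⊆ F) :
    ground S ⊆ F := by
  intro n hn
  obtain ⟨x, hx⟩ := mem_ground_iff_s3.1 hn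
  exact h x hx

lemma irred_ground_bound {S : γ → Finset ℕ} (h : IrreducibleRepr S) :
    (ground S).card ≤ 2 ^ Fintype.card γ := by
  by_contra hc
  push_neg at hc
  have hcard : (Finset.univ : Finset (Finset γ)).card < (ground S).card := by
    simpa [Finset.card_univ, Fintype.card_finset] using hc
  obtain ⟨u, hu, v, hv, huv, hf⟩ :=
    Finset.exists_ne_map_eq_of_card_lt_of_maps_to (t := (Finset.univ : Finset (Finset γ)))
      hcard (f := fun n => Finset.univ.filter (fun x => n ∈ S x)) (fun n _ => Finset.mem_univ _)
  have htr : ∀ x, u ∈ S x ↔ v ∈ S x := by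
    intro x
    constructor <;> intro hx
    · have hx' : x ∈ Finset.univ.filter (fun z => u ∈ S z) :=
        Finset.mem_filter.2 ⟨Finset.mem_univ _, hx⟩
      rw [hf] at hx'
      exact (Finset.mem_filter.1 hx').2
    · have hx' : x ∈ Finset.univ.filter (fun z => v ∈ S z) :=
        Finset.mem_filter.2 ⟨Finset.mem_univ _, hx⟩
      rw [← hf] at hx'
      exact (Finset.mem_filter.1 hx').2
  set T : γ → Finset ℕ := fun x => (S x).erase v with hTdef
  have hTmem : ∀ x n, n ∈ T x ↔ n ≠ v ∧ n ∈ S x := by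
    intro x n; rw [hTdef]; simp
  have hTrepr : IsRepr T := by
    intro a b
    rw [h.1 a b]
    constructor
    · intro hab n hn
      rw [hTmem] at hn ⊢
      exact ⟨hn.1, hab hn.2⟩
    · intro hab n hn
      by_cases hnv : n = v
      · subst hnv
        have hu' : u ∈ T a := (hTmem a u).2 ⟨huv, (htr a).2 hn⟩
        exact (htr b).1 ((hTmem b u).1 (hab hu')).2
      · exact ((hTmem b n).1 (hab ((hTmem a n).2 ⟨hnv, hn⟩))).2
  have hgsub : ground T ⊆ (ground S).erase v := by
    intro n hn
    obtain ⟨x, hx⟩ := mem_ground_iff_s3.1 hn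
    rw [hTmem] at hx
    exact Finset.mem_erase.2 ⟨hx.1, mem_ground' hx.2⟩
  have hred : IsReduction T S := by
    constructor
    · exact (Finset.card_le_card hgsub).trans Finset.card_erase_le
    · intro x
      apply Finset.card_le_card
      intro n hn
      exact ((hTmem x n).1 hn).2
  have hle : (ground S).card ≤ ((ground S).erase v).card :=
    (h.2 T hTrepr hred).1.trans (Finset.card_le_card hgsub)
  rw [Finset.card_erase_of_mem hv] at hle
  have hpos : 0 < (ground S).card := Finset.card_pos.2 ⟨v, hv⟩
  omega

lemma exists_irred (S : γ → Finset ℕ) (hS : IsRepr S) :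
    ∃ T : γ → Finset ℕ, IsRepr T ∧ IsReduction T S ∧ IrreducibleRepr T := by
  classical
  set G : Set ℕ := {n | ∃ T : γ → Finset ℕ, IsRepr T ∧ IsReduction T S ∧ (ground T).card = n}
    with hGdef
  have hG : G.Nonempty := ⟨(ground S).card, S, hS, ⟨le_rfl, fun _ => le_rfl⟩, rfl⟩
  obtain ⟨T₁, hT₁r, hT₁red, hT₁g⟩ := Nat.sInf_mem hG
  set m := sInf G with hm
  set H : Set ℕ := {n | ∃ T : γ → Finset ℕ, IsRepr T ∧ IsReduction T S ∧
      (ground T).card = m ∧ (∑ x, (T x).card) = n} with hHdef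
  have hH : H.Nonempty := ⟨_, T₁, hT₁r, hT₁red, hT₁g, rfl⟩
  obtain ⟨T, hTr, hTred, hTg, hTs⟩ := Nat.sInf_mem hH
  refine ⟨T, hTr, hTred, hTr, ?_⟩
  intro U hUr hUred
  have hUS : IsReduction U S := ⟨hUred.1.trans hTred.1, fun x => (hUred.2 x).trans (hTred.2 x)⟩
  have hUg : (ground U).card = m :=
    le_antisymm (hUred.1.trans_eq hTg) (Nat.sInf_le ⟨U, hUr, hUS, rfl⟩)
  have hUs : (∑ x, (U x).card) = sInf H :=
    le_antisymm ((Finset.sum_le_sum (fun x _ => hUred.2 x)).trans (le_of_eq hTs))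
      (Nat.sInf_le ⟨U, hUr, hUS, hUg, rfl⟩)
  have hsum : (∑ x, (U x).card) = (∑ x, (T x).card) := hUs.trans hTs.symm
  have hpt : ∀ x, (T x).card ≤ (U x).card := by
    intro x
    by_contra hx
    push_neg at hx
    have : (∑ z, (U z).card) < (∑ z, (T z).card) :=
      Finset.sum_lt_sum (fun z _ => hUred.2 z) ⟨x, Finset.mem_univ x, hx⟩
    omega
  exact ⟨hTg.trans_le hUg.ge, hpt⟩

lemma iir_bddAbove :
    BddAbove {w | ∃ S : γ → Finset ℕ, IrreducibleRepr S ∧ (ground S).card = w} := by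
  refine ⟨2 ^ Fintype.card γ, ?_⟩
  rintro w ⟨S, hS, rfl⟩
  exact irred_ground_bound hS

lemma irred_ground_le_iir {S : γ → Finset ℕ} (h : IrreducibleRepr S) :
    (ground S).card ≤ iir γ :=
  le_csSup iir_bddAbove ⟨S, h, rfl⟩

end Aux

lemma subtype_le_iff {T : Finset (Finset ℕ)} (A B : {A // A ∈ T}) :
    A ≤ B ↔ A.1 ⊆ B.1 := by
  rw [← Finset.le_iff_subset]
  exact Subtype.coe_le_coe.symm

lemma main_sub (T : Finset (Finset ℕ)) (hTne : ∀ A ∈ T, A.Nonempty) (ε : ℕ)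
    (hε : ε = if ∃! A : {A // A ∈ T}, IsMin A then 1 else 0) :
    ∃ U : {A // A ∈ T} → Finset ℕ, IsRepr U ∧ (∀ A, (U A).Nonempty) ∧
      (∀ A : {A // A ∈ T}, (U A).card ≤ A.1.card) ∧
      (ground U).card ≤ iir {A // A ∈ T} + ε := by
  classical
  by_cases hone : ∃! A : {A // A ∈ T}, IsMin A
  · -- ε = 1
    have hε1 : ε = 1 := by rw [hε, if_pos hone]
    obtain ⟨A₀, hA₀min, hA₀uniq⟩ := hone
    have hmin : ∀ B : {A // A ∈ T}, A₀ ≤ B := by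
      intro B
      obtain ⟨m, hm, hmm⟩ := Finset.exists_minimal
        (s := Finset.univ.filter (fun C : {A // A ∈ T} => C ≤ B))
        ⟨B, Finset.mem_filter.2 ⟨Finset.mem_univ _, le_rfl⟩⟩
      have hmB : m ≤ B := (Finset.mem_filter.1 hm).2
      have hmmin : IsMin m := by
        intro c hc
        have hcB : c ≤ B := hc.trans hmB
        have hnlt : ¬ c < m := fun h' => h'.not_ge (hmm (Finset.mem_filter.2 ⟨Finset.mem_univ _, hcB⟩) h'.le)
        rcases lt_or_eq_of_le hc with h | h
        · exact absurd h hnlt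
        · exact h ▸ le_rfl
      have : m = A₀ := hA₀uniq m hmmin
      exact this ▸ hmB
    have hA₀sub : ∀ B : {A // A ∈ T}, A₀.1 ⊆ B.1 :=
      fun B => (subtype_le_iff A₀ B).1 (hmin B)
    have hA₀ne : A₀.1.Nonempty := hTne A₀.1 A₀.2
    obtain ⟨a₀, ha₀⟩ := hA₀ne
    set V : {A // A ∈ T} → Finset ℕ := fun A => A.1 \ A₀.1 with hV
    have hVmem : ∀ (A : {A // A ∈ T}) (n : ℕ), n ∈ V A ↔ n ∈ A.1 ∧ n ∉ A₀.1 := by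
      intro A n; rw [hV]; simp
    have hVr : IsRepr V := by
      intro A B
      rw [subtype_le_iff]
      constructor
      · intro h n hn
        rw [hVmem] at hn ⊢
        exact ⟨h hn.1, hn.2⟩
      · intro h n hn
        by_cases hn0 : n ∈ A₀.1
        · exact hA₀sub B hn0
        · exact ((hVmem B n).1 (h ((hVmem A n).2 ⟨hn, hn0⟩))).1
    obtain ⟨U', hU'r, hU'red, hU'irr⟩ := exists_irred V hVr
    obtain ⟨m, hm⟩ := Infinite.exists_notMem_finset (ground U')
    refine ⟨fun A => insert m (U' A), ?_, fun A => ⟨m, Finset.mem_insert_self _ _⟩, ?_, ?_⟩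
    · intro A B
      rw [hU'r A B]
      constructor
      · intro h
        exact Finset.insert_subset_insert _ h
      · intro h n hn
        rcases Finset.mem_insert.1 (h (Finset.mem_insert_of_mem hn)) with h' | h'
        · exact absurd (h' ▸ mem_ground' hn) hm
        · exact h'
    · intro A
      show (insert m (U' A)).card ≤ (A.1).card
      have hc1 : (insert m (U' A)).card ≤ (U' A).card + 1 := Finset.card_insert_le _ _
      have hc2 : (U' A).card ≤ (V A).card := hU'red.2 A
      have hsub : V A ⊆ A.1.erase a₀ := by
        intro n hn
        rw [hVmem] at hn
        exact Finset.mem_erase.2 ⟨fun h => hn.2 (h ▸ ha₀), hn.1⟩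
      have hc3 := Finset.card_le_card hsub
      rw [Finset.card_erase_of_mem (hA₀sub A ha₀)] at hc3
      have hpos : 0 < A.1.card := Finset.card_pos.2 ⟨a₀, hA₀sub A ha₀⟩
      omega
    · have hsub : ground (fun A => insert m (U' A)) ⊆ insert m (ground U') :=
        ground_subset (fun A => Finset.insert_subset_insert _ (fun n hn => mem_ground' hn))
      have h1 := Finset.card_le_card hsub
      have h2 : (insert m (ground U')).card ≤ (ground U').card + 1 := Finset.card_insert_le _ _
      have h3 := irred_ground_le_iir hU'irr
      omega
  · -- ε = 0
    have hε0 : ε = 0 := by rw [hε, if_neg hone]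
    have hW : IsRepr (fun A : {A // A ∈ T} => A.1) := fun A B => subtype_le_iff A B
    obtain ⟨U, hUr, hUred, hUirr⟩ := exists_irred _ hW
    refine ⟨U, hUr, ?_, fun A => hUred.2 A, ?_⟩
    · intro A
      rw [Finset.nonempty_iff_ne_empty]
      intro hA
      apply hone
      have hminU : ∀ B, A ≤ B := fun B => (hUr A B).2 (by rw [hA]; exact Finset.empty_subset _)
      refine ⟨A, fun b hb => hminU b, ?_⟩
      intro B hB
      exact le_antisymm (hB (hminU B)) (hminU B)
    · rw [hε0]
      simpa using irred_ground_le_iir hUirr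

lemma eo_subset_iff (s u s' u' : Finset ℕ) :
    (s.image (fun n => 2*n) ∪ u.image (fun n => 2*n+1) ⊆
     s'.image (fun n => 2*n) ∪ u'.image (fun n => 2*n+1)) ↔ s ⊆ s' ∧ u ⊆ u' := by
  constructor
  · intro h
    constructor
    · intro n hn
      have h1 := h (Finset.mem_union_left _ (Finset.mem_image_of_mem _ hn))
      rcases Finset.mem_union.1 h1 with h' | h'
      · obtain ⟨k, hk, hke⟩ := Finset.mem_image.1 h'
        have hkn : k = n := by omega
        exact hkn ▸ hk
      · obtain ⟨k, hk, hke⟩ := Finset.mem_image.1 h'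
        omega
    · intro n hn
      have h1 := h (Finset.mem_union_right _ (Finset.mem_image_of_mem _ hn))
      rcases Finset.mem_union.1 h1 with h' | h'
      · obtain ⟨k, hk, hke⟩ := Finset.mem_image.1 h'
        omega
      · obtain ⟨k, hk, hke⟩ := Finset.mem_image.1 h'
        have hkn : k = n := by omega
        exact hkn ▸ hk
  · rintro ⟨h1, h2⟩
    exact Finset.union_subset_union (Finset.image_subset_image h1) (Finset.image_subset_image h2)

lemma eo_card (s u : Finset ℕ) :
    (s.image (fun n => 2*n) ∪ u.image (fun n => 2*n+1)).card = s.card + u.card := by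
  have hd : Disjoint (s.image (fun n => 2*n)) (u.image (fun n => 2*n+1)) := by
    rw [Finset.disjoint_left]
    rintro a ha hb
    obtain ⟨k, hk, hke⟩ := Finset.mem_image.1 ha
    obtain ⟨l, hl, hle⟩ := Finset.mem_image.1 hb
    omega
  rw [Finset.card_union_of_disjoint hd,
    Finset.card_image_of_injective _ (by intro a b h; change 2*a=2*b at h; omega :
      Function.Injective (fun n => 2*n)),
    Finset.card_image_of_injective _ (by intro a b h; change 2*a+1=2*b+1 at h; omega :
      Function.Injective (fun n => 2*n+1))]


/-- the key technical lemma. -/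
theorem key_step (α : Type) [PartialOrder α] [Fintype α]
    (S : α → Finset ℕ) (hS : IsRepr S) (y : α)
    (T : Finset (Finset ℕ))
    (hT : T = (Finset.univ.filter (fun x : α => ¬ x ≤ y)).image (fun x => S x \ S y))
    (ε : ℕ)
    (hε : ε = if ∃! A : {A // A ∈ T}, IsMin A then 1 else 0) :
    ∃ S' : α → Finset ℕ, IsRepr S' ∧ (∀ x : α, (S' x).card ≤ (S x).card) ∧
      (ground S').card ≤ iir {A // A ∈ T} + ε + (S y).card := by
  classical
  have hmemT : ∀ x : α, ¬ x ≤ y → S x \ S y ∈ T := by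
    intro x hx
    rw [hT]
    exact Finset.mem_image_of_mem _ (Finset.mem_filter.2 ⟨Finset.mem_univ _, hx⟩)
  have hTne : ∀ A ∈ T, A.Nonempty := by
    intro A hA
    rw [hT] at hA
    obtain ⟨x, hx, rfl⟩ := Finset.mem_image.1 hA
    have hxy : ¬ x ≤ y := (Finset.mem_filter.1 hx).2
    rw [Finset.sdiff_nonempty]
    exact fun h => hxy ((hS x y).2 h)
  obtain ⟨U, hUr, hUne, hUcard, hUg⟩ := main_sub T hTne ε hε
  set p : α → Finset ℕ := fun x => if x ≤ y then S x else S x ∩ S y with hp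
  set q : α → Finset ℕ :=
    fun x => if hx : x ≤ y then (∅ : Finset ℕ) else U ⟨S x \ S y, hmemT x hx⟩ with hq
  refine ⟨fun x => (p x).image (fun n => 2*n) ∪ (q x).image (fun n => 2*n+1), ?_, ?_, ?_⟩
  · -- IsRepr
    intro a b
    rw [eo_subset_iff]
    by_cases ha : a ≤ y <;> by_cases hb : b ≤ y
    · rw [hp, hq]
      simp only [if_pos ha, if_pos hb, dif_pos ha, dif_pos hb]
      rw [hS a b]
      simp
    · rw [hp, hq]
      simp only [if_pos ha, if_neg hb, dif_pos ha]
      rw [hS a b]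
      constructor
      · intro h
        exact ⟨Finset.subset_inter h ((hS a y).1 ha), Finset.empty_subset _⟩
      · intro h
        exact h.1.trans Finset.inter_subset_left
    · constructor
      · intro h
        exact absurd ((hS a y).2 (((hS a b).1 h).trans ((hS b y).1 hb))) ha
      · rintro ⟨-, h2⟩
        exfalso
        obtain ⟨n, hn⟩ := hUne ⟨S a \ S y, hmemT a ha⟩
        have hn' : n ∈ q a := by simp only [hq, dif_neg ha]; exact hn
        have hmem := h2 hn'
        simp only [hq, dif_pos hb] at hmem
        exact absurd hmem (Finset.notMem_empty n)
    · rw [hp, hq]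
      simp only [if_neg ha, if_neg hb, dif_neg ha, dif_neg hb]
      have hAB : U ⟨S a \ S y, hmemT a ha⟩ ⊆ U ⟨S b \ S y, hmemT b hb⟩ ↔
          S a \ S y ⊆ S b \ S y := by
        rw [← hUr, subtype_le_iff]
      rw [hS a b]
      constructor
      · intro h
        refine ⟨Finset.inter_subset_inter h (le_refl (S y)), hAB.2 ?_⟩
        intro n hn
        rw [Finset.mem_sdiff] at hn ⊢
        exact ⟨h hn.1, hn.2⟩
      · intro ⟨h1, h2⟩ n hn
        by_cases hny : n ∈ S y
        · exact Finset.mem_inter.1 (h1 (Finset.mem_inter.2 ⟨hn, hny⟩)) |>.1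
        · exact (Finset.mem_sdiff.1 (hAB.1 h2 (Finset.mem_sdiff.2 ⟨hn, hny⟩))).1
  · -- cards
    intro x
    rw [eo_card]
    by_cases hx : x ≤ y
    · rw [hp, hq]
      simp only [if_pos hx, dif_pos hx]
      simp
    · rw [hp, hq]
      simp only [if_neg hx, dif_neg hx]
      have h1 : (U ⟨S x \ S y, hmemT x hx⟩).card ≤ (S x \ S y).card :=
        hUcard ⟨S x \ S y, hmemT x hx⟩
      have h2 : (S x ∩ S y).card + (S x \ S y).card = (S x).card :=
        Finset.card_inter_add_card_sdiff _ _
      omega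
  · -- ground
    have hpy : ∀ x, p x ⊆ S y := by
      intro x
      by_cases hx : x ≤ y
      · simp only [hp, if_pos hx]; exact (hS x y).1 hx
      · simp only [hp, if_neg hx]; exact Finset.inter_subset_right
    have hqg : ∀ x, q x ⊆ ground U := by
      intro x
      by_cases hx : x ≤ y
      · simp only [hq, dif_pos hx]; exact Finset.empty_subset _
      · simp only [hq, dif_neg hx]; exact fun n hn => mem_ground' hn
    have hsub : ground (fun x => (p x).image (fun n => 2*n) ∪ (q x).image (fun n => 2*n+1)) ⊆
        (S y).image (fun n => 2*n) ∪ (ground U).image (fun n => 2*n+1) :=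
      ground_subset (fun x => Finset.union_subset_union
        (Finset.image_subset_image (hpy x)) (Finset.image_subset_image (hqg x)))
    have h1 := Finset.card_le_card hsub
    rw [eo_card] at h1
    omega
end

section
/- For every finite poset P, ch(P) ≤ dim₂(P) ≤ cw(P) ≤ iir(P). -/
open scoped Classical

lemma subset_ground {α β : Type} [Fintype α] (S : α → Finset β) (x : α) : S x ⊆ ground S :=
  Finset.subset_biUnion_of_mem S (Finset.mem_univ x)

lemma exists_repr {α : Type} [PartialOrder α] [Fintype α] : ∃ S : α → Finset ℕ, IsRepr S := by
  classical
  set e := Fintype.equivFin α with he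
  refine ⟨fun x => (downSet x).image (fun a => (e a : ℕ)), ?_⟩
  have hinj : Function.Injective (fun a : α => ((e a : ℕ))) := by
    intro a b h
    exact e.injective (Fin.val_injective h)
  intro x y
  rw [Finset.image_subset_image_iff hinj]
  constructor
  · intro h u hu
    simp only [downSet, Finset.mem_filter, Finset.mem_univ, true_and] at hu ⊢
    exact le_trans hu h
  · intro h
    have hx : x ∈ downSet x := by
      simp [downSet]
    have := h hx
    simpa [downSet] using this

lemma irreducible_ground_bound {α : Type} [PartialOrder α] [Fintype α]
    (S : α → Finset ℕ) (hS : IrreducibleRepr S) :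
    (ground S).card ≤ Fintype.card α * Fintype.card α := by
  classical
  set k : α × α → Finset ℕ := fun p =>
    if h : (S p.1 \ S p.2).Nonempty then {h.choose} else ∅ with hk
  set K : Finset ℕ := Finset.univ.biUnion k with hKdef
  set T : α → Finset ℕ := fun x => S x ∩ K with hT
  have hTsub : ∀ x, T x ⊆ S x := fun x => Finset.inter_subset_left
  have hkey : ∀ x y : α, ¬ x ≤ y → ∃ n, n ∈ T x ∧ n ∉ S y := by
    intro x y hxy
    have hne : (S x \ S y).Nonempty := by
      rw [Finset.sdiff_nonempty]
      intro hsub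
      exact hxy ((hS.1 x y).mpr hsub)
    have hmem : hne.choose ∈ S x \ S y := hne.choose_spec
    refine ⟨hne.choose, ?_, (Finset.mem_sdiff.mp hmem).2⟩
    have hKmem : hne.choose ∈ K := by
      refine Finset.mem_biUnion.mpr ⟨(x, y), Finset.mem_univ _, ?_⟩
      simp only [hk, dif_pos hne, Finset.mem_singleton]
    exact Finset.mem_inter.mpr ⟨(Finset.mem_sdiff.mp hmem).1, hKmem⟩
  have hTrepr : IsRepr T := by
    intro x y
    constructor
    · intro h
      exact Finset.inter_subset_inter ((hS.1 x y).mp h) (le_refl K)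
    · intro h
      by_contra hxy
      obtain ⟨n, hnx, hny⟩ := hkey x y hxy
      exact hny (Finset.mem_inter.mp (h hnx)).1
  have hred : IsReduction T S := by
    constructor
    · apply Finset.card_le_card
      intro n hn
      simp only [ground, Finset.mem_biUnion] at hn ⊢
      obtain ⟨x, hx, hnx⟩ := hn
      exact ⟨x, hx, hTsub x hnx⟩
    · intro x; exact Finset.card_le_card (hTsub x)
  have h2 := hS.2 T hTrepr hred
  have hTK : ground T ⊆ K := by
    intro n hn
    simp only [ground, Finset.mem_biUnion] at hn
    obtain ⟨x, _, hnx⟩ := hn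
    exact (Finset.mem_inter.mp hnx).2
  have hKcard : K.card ≤ Fintype.card α * Fintype.card α := by
    calc K.card ≤ ∑ p : α × α, (k p).card := Finset.card_biUnion_le
    _ ≤ ∑ _p : α × α, 1 := by
        apply Finset.sum_le_sum
        intro p _
        by_cases h : (S p.1 \ S p.2).Nonempty <;> simp [hk, h]
    _ = Fintype.card α * Fintype.card α := by simp [Fintype.card_prod]
  exact h2.1.trans ((Finset.card_le_card hTK).trans hKcard)

/-- `ch P ≤ dim₂ P ≤ cw P ≤ iir P`. -/
theorem ch_le_dim2_le_cw_le_iir (α : Type) [PartialOrder α] [Fintype α] [Nonempty α] :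
    chHeight α ≤ dim2 α ∧ dim2 α ≤ cw α ∧ cw α ≤ iir α := by
  classical
  obtain ⟨S₀, hS₀⟩ := exists_repr (α := α)
  have hdimne : {w | ∃ S : α → Finset ℕ, IsRepr S ∧ (ground S).card = w}.Nonempty :=
    ⟨(ground S₀).card, S₀, hS₀, rfl⟩
  obtain ⟨Sd, hSd, hSdcard⟩ : ∃ S : α → Finset ℕ, IsRepr S ∧ (ground S).card = dim2 α := by
    unfold dim2
    exact Nat.sInf_mem hdimne
  have h1 : chHeight α ≤ dim2 α := by
    apply Nat.sInf_le
    exact ⟨Sd, hSd, fun x => hSdcard ▸ Finset.card_le_card (subset_ground Sd x)⟩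
  have hchne : {h | ∃ S : α → Finset ℕ, IsRepr S ∧ ∀ x, (S x).card ≤ h}.Nonempty :=
    ⟨(ground S₀).card, S₀, hS₀, fun x => Finset.card_le_card (subset_ground S₀ x)⟩
  obtain ⟨Sh, hSh, hShle⟩ :
      ∃ S : α → Finset ℕ, IsRepr S ∧ ∀ x, (S x).card ≤ chHeight α := by
    unfold chHeight
    exact Nat.sInf_mem hchne
  have hcwne : {w | ∃ S : α → Finset ℕ, IsRepr S ∧ (ground S).card = w ∧
      ∀ x, (S x).card ≤ chHeight α}.Nonempty :=
    ⟨(ground Sh).card, Sh, hSh, rfl, hShle⟩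
  obtain ⟨Sc, hSc, hSccard, hScle⟩ :
      ∃ S : α → Finset ℕ, IsRepr S ∧ (ground S).card = cw α ∧
        ∀ x, (S x).card ≤ chHeight α := by
    unfold cw
    exact Nat.sInf_mem hcwne
  have h2 : dim2 α ≤ cw α := Nat.sInf_le ⟨Sc, hSc, hSccard⟩
  -- cw ≤ iir
  set goodSet : Set ℕ := {m | ∃ T : α → Finset ℕ, IsRepr T ∧ IsReduction T Sc ∧
      (ground T).card + ∑ x, (T x).card = m} with hgood
  have hgne : goodSet.Nonempty := ⟨_, Sc, hSc, ⟨le_refl _, fun x => le_refl _⟩, rfl⟩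
  obtain ⟨T₀, hT₀repr, hT₀red, hT₀val⟩ := Nat.sInf_mem hgne
  have hmin : ∀ T : α → Finset ℕ, IsRepr T → IsReduction T Sc →
      sInf goodSet ≤ (ground T).card + ∑ x, (T x).card :=
    fun T h1 h2 => Nat.sInf_le ⟨T, h1, h2, rfl⟩
  have hirr : IrreducibleRepr T₀ := by
    refine ⟨hT₀repr, ?_⟩
    intro T hT hred
    have hredS : IsReduction T Sc :=
      ⟨hred.1.trans hT₀red.1, fun x => (hred.2 x).trans (hT₀red.2 x)⟩
    have hle := hmin T hT hredS
    have hgr := hred.1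
    have hsum : ∑ x, (T x).card ≤ ∑ x, (T₀ x).card :=
      Finset.sum_le_sum (fun x _ => hred.2 x)
    have hgeq : (ground T₀).card ≤ (ground T).card := by omega
    have hseq : ∑ x, (T x).card = ∑ x, (T₀ x).card := by omega
    refine ⟨hgeq, fun x => ?_⟩
    by_contra hx
    push_neg at hx
    have : ∑ x, (T x).card < ∑ x, (T₀ x).card :=
      Finset.sum_lt_sum (fun x _ => hred.2 x) ⟨x, Finset.mem_univ x, hx⟩
    omega
  have hcwle : cw α ≤ (ground T₀).card :=
    Nat.sInf_le ⟨T₀, hT₀repr, rfl, fun x => (hT₀red.2 x).trans (hScle x)⟩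
  have hbdd : BddAbove {w | ∃ S : α → Finset ℕ, IrreducibleRepr S ∧ (ground S).card = w} := by
    refine ⟨Fintype.card α * Fintype.card α, ?_⟩
    rintro w ⟨S, hS, rfl⟩
    exact irreducible_ground_bound S hS
  have h3 : cw α ≤ iir α := hcwle.trans (le_csSup hbdd ⟨T₀, hirr, rfl⟩)
  exact ⟨h1, h2, h3⟩
end

section
/- Let A be an antichain with |A| ≥ 2. Then dim₂(A) is the least positive integer s such that the central binomial coefficient C(s, ⌊s/2⌋) ≥ |A|. In particular dim₂(A) = Θ(log |A|). -/
open scoped Classical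

lemma mem_ground {α β : Type} [Fintype α] (S : α → Finset β) (a : β) :
    a ∈ ground S ↔ ∃ x, a ∈ S x := by
  unfold ground
  simp

lemma repr_card_bound {α : Type} [PartialOrder α] [Fintype α]
    (hanti : ∀ x y : α, x ≤ y → x = y) (hcard : 2 ≤ Fintype.card α)
    (S : α → Finset ℕ) (hS : IsRepr S) :
    Fintype.card α ≤ (ground S).card.choose ((ground S).card / 2) := by
  classical
  have hsub : ∀ x, S x ⊆ ground S := by
    intro x a ha
    exact (mem_ground S a).2 ⟨x, ha⟩
  set T : α → Finset {a // a ∈ ground S} := fun x => (S x).subtype (· ∈ ground S) with hT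
  have hTsub : ∀ x y, T x ⊆ T y ↔ S x ⊆ S y := by
    intro x y
    constructor
    · intro h a ha
      have h1 : (⟨a, hsub x ha⟩ : {a // a ∈ ground S}) ∈ T x := Finset.mem_subtype.2 ha
      exact Finset.mem_subtype.1 (h h1)
    · intro h a ha
      exact Finset.mem_subtype.2 (h (Finset.mem_subtype.1 ha))
  have hTinj : Function.Injective T := by
    intro x y hxy
    exact hanti x y ((hS x y).2 ((hTsub x y).1 (hxy ▸ Finset.Subset.refl _)))
  have hanti' : IsAntichain (· ⊆ ·) ((Finset.univ.image T : Finset (Finset {a // a ∈ ground S})) :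
      Set (Finset {a // a ∈ ground S})) := by
    intro A hA B hB hne hAB
    simp only [Finset.coe_image, Finset.coe_univ, Set.image_univ, Set.mem_range] at hA hB
    obtain ⟨x, rfl⟩ := hA
    obtain ⟨y, rfl⟩ := hB
    exact hne (by rw [hanti x y ((hS x y).2 ((hTsub x y).1 hAB))])
  have hsp := IsAntichain.sperner hanti'
  rw [Finset.card_image_of_injective _ hTinj, Finset.card_univ, Fintype.card_coe] at hsp
  exact hsp

/-- for an antichain `A` with `|A| ≥ 2`, `dim₂ A` is the least positive `s`
with `C(s, ⌊s/2⌋) ≥ |A|`. -/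
theorem dim2_antichain (α : Type) [PartialOrder α] [Fintype α]
    (hanti : ∀ x y : α, x ≤ y → x = y) (hcard : 2 ≤ Fintype.card α) :
    dim2 α = sInf {s : ℕ | 0 < s ∧ Fintype.card α ≤ s.choose (s / 2)} := by
  classical
  set n := Fintype.card α with hn
  set C := {s : ℕ | 0 < s ∧ n ≤ s.choose (s / 2)} with hC
  have hCne : C.Nonempty := by
    refine ⟨n, by omega, ?_⟩
    calc n = n.choose 1 := (Nat.choose_one_right n).symm
    _ ≤ n.choose (n / 2) := Nat.choose_le_middle 1 n
  set s₀ := sInf C with hs0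
  unfold dim2
  have hs0mem : s₀ ∈ C := Nat.sInf_mem hCne
  set 𝒜 := (Finset.range s₀).powersetCard (s₀ / 2) with h𝒜
  have hcard𝒜 : Fintype.card {A // A ∈ 𝒜} = s₀.choose (s₀ / 2) := by
    rw [Fintype.card_coe, h𝒜, Finset.card_powersetCard, Finset.card_range]
  obtain ⟨e⟩ : Nonempty (α ↪ {A // A ∈ 𝒜}) := by
    apply Function.Embedding.nonempty_of_card_le
    rw [hcard𝒜]; exact hs0mem.2
  set S : α → Finset ℕ := fun x => (e x).1 with hSdef
  have hmem : ∀ x, S x ⊆ Finset.range s₀ ∧ (S x).card = s₀ / 2 := fun x =>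
    Finset.mem_powersetCard.1 (e x).2
  have hS : IsRepr S := by
    intro x y
    constructor
    · intro h; rw [hanti x y h]
    · intro h
      have : S x = S y :=
        Finset.eq_of_subset_of_card_le h (by rw [(hmem x).2, (hmem y).2])
      have : e x = e y := Subtype.ext this
      rw [e.injective this]
  have hground : ground S ⊆ Finset.range s₀ := by
    intro a ha
    obtain ⟨x, hx⟩ := (mem_ground S a).1 ha
    exact (hmem x).1 hx
  have hwle : (ground S).card ≤ s₀ := by
    calc (ground S).card ≤ (Finset.range s₀).card := Finset.card_le_card hground
    _ = s₀ := Finset.card_range s₀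
  have hwC : (ground S).card ∈ C := by
    have hb := repr_card_bound hanti hcard S hS
    refine ⟨?_, hb⟩
    rcases Nat.eq_zero_or_pos (ground S).card with h | h
    · rw [h] at hb; simp at hb; omega
    · exact h
  have hwge : s₀ ≤ (ground S).card := Nat.sInf_le hwC
  have hweq : (ground S).card = s₀ := le_antisymm hwle hwge
  apply le_antisymm
  · exact Nat.sInf_le ⟨S, hS, hweq⟩
  · have hne : {w | ∃ S : α → Finset ℕ, IsRepr S ∧ (ground S).card = w}.Nonempty :=
      ⟨s₀, S, hS, hweq⟩
    obtain ⟨T, hT, hTw⟩ := Nat.sInf_mem hne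
    apply Nat.sInf_le
    rw [← hTw]
    have hb := repr_card_bound hanti hcard T hT
    refine ⟨?_, hb⟩
    rcases Nat.eq_zero_or_pos (ground T).card with h | h
    · rw [h] at hb; simp at hb; omega
    · exact h
end

section
/- For a finite poset P, iir(P) = |P| if and only if P satisfies all three of the following: (No Block is a Chain) for every x ∈ P there is y ∈ P incomparable to x; (Two Down) whenever y ∈ P covers at least two elements, there exists z ∈ P with D_P(y) ⊆ D_P(z) and y incomparable to z; (Parallel Pair) for every incomparable pair x, y in P, either there exists y' with D_P(x) ⊆ D_P(y'), y ≤ y', and x incomparable to y', or there exists x' with D_P(y) ⊆ D_P(x'), x ≤ x', and y incomparable to x'. -/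
open scoped Classical

set_option linter.unusedSectionVars false

namespace IirAux

open Finset

variable {α : Type} [PartialOrder α] [Fintype α]

/-- A down-closed finset. -/
def DC (A : Finset α) : Prop := ∀ a ∈ A, ∀ b, b ≤ a → b ∈ A

lemma mem_downSet {x a : α} : a ∈ downSet x ↔ a ≤ x := by
  simp [downSet]

lemma dc_downSet (x : α) : DC (downSet x) := by
  intro a ha b hb
  exact mem_downSet.2 (hb.trans (mem_downSet.1 ha))

lemma repr_mono {β : Type} {T : α → Finset β} (h : IsRepr T) {u v : α} (huv : u ≤ v) :
    T u ⊆ T v := (h u v).1 huv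

lemma repr_sep {β : Type} {T : α → Finset β} (h : IsRepr T) {u v : α} (huv : ¬ u ≤ v) :
    ∃ g ∈ T u, g ∉ T v := by
  have : ¬ T u ⊆ T v := fun hs => huv ((h u v).2 hs)
  exact Finset.not_subset.1 this

noncomputable def enc : Option α → ℕ := (Countable.exists_injective_nat (Option α)).choose

lemma enc_inj : Function.Injective (enc (α := α)) :=
  (Countable.exists_injective_nat (Option α)).choose_spec

noncomputable def es (a : α) : ℕ := enc (some a)

lemma es_inj : Function.Injective (es (α := α)) := fun a b h => by
  have := enc_inj h; simpa using this

lemma es_ne_none (a : α) : es a ≠ enc (none : Option α) := by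
  intro h
  exact Option.some_ne_none a (enc_inj h)

/-- The canonical representation, coded over `ℕ`. -/
noncomputable def C : α → Finset ℕ := fun x => (downSet x).image es

lemma C_repr : IsRepr (C (α := α)) := by
  intro x y
  constructor
  · intro hxy
    exact image_subset_image (fun a ha => mem_downSet.2 ((mem_downSet.1 ha).trans hxy))
  · intro hsub
    have hx : es x ∈ C x := mem_image_of_mem _ (mem_downSet.2 le_rfl)
    have := hsub hx
    obtain ⟨v, hv, hev⟩ := mem_image.1 this
    rw [es_inj hev] at hv
    exact mem_downSet.1 hv

lemma C_card (x : α) : (C x).card = (downSet x).card :=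
  card_image_of_injective _ es_inj

lemma ground_C : ground (C (α := α)) = (Finset.univ : Finset α).image es := by
  ext g
  simp only [ground, C, mem_biUnion, mem_image, mem_univ, true_and]
  constructor
  · rintro ⟨x, v, hv, rfl⟩
    exact ⟨v, rfl⟩
  · rintro ⟨v, rfl⟩
    exact ⟨v, v, mem_downSet.2 le_rfl, rfl⟩

lemma card_ground_nat (T : α → Finset ℕ) :
    (ground T).card = ((Finset.univ : Finset α).biUnion T).card := by
  congr 1
  ext g
  simp [ground, mem_biUnion]

lemma mem_ground_nat {T : α → Finset ℕ} {g : ℕ} :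
    g ∈ ground T ↔ ∃ x, g ∈ T x := by
  simp [ground, mem_biUnion]

lemma mem_if_singleton {c : Prop} [Decidable c] {g v : ℕ} :
    g ∈ (if c then ({v} : Finset ℕ) else ∅) ↔ c ∧ g = v := by
  split_ifs with h <;> simp [h]

lemma ground_C_card : (ground (C (α := α))).card = Fintype.card α := by
  rw [ground_C, card_image_of_injective _ es_inj, card_univ]



section Key

variable {T : α → Finset ℕ}

lemma biUnion_downSet (hT : IsRepr T) (x : α) : (downSet x).biUnion T = T x := by
  apply Finset.Subset.antisymm
  · intro g hg
    obtain ⟨u, hu, hgu⟩ := mem_biUnion.1 hg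
    exact repr_mono hT (mem_downSet.1 hu) hgu
  · intro g hg
    exact mem_biUnion.2 ⟨x, mem_downSet.2 le_rfl, hg⟩

lemma case2aux (hP : ParallelPair α)
    (hT : IsRepr T) (hcnt : ∀ x, (T x).card ≤ (downSet x).card)
    {A : Finset α} (hdc : DC A)
    (IH : ∀ B : Finset α, B.card < A.card → DC B → B.card ≤ (B.biUnion T).card)
    {x y : α} (hxA : x ∈ A) (hyA : y ∈ A)
    (hxmax : ∀ u ∈ A, ¬ x < u) (hymax : ∀ u ∈ A, ¬ y < u)
    (hyx : ¬ y ≤ x)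
    {y' : α} (hy'1 : ∀ u, u < x → u < y') (hy'2 : y ≤ y') (hy'3 : ¬ x ≤ y')
    (hcon : (A.biUnion T).card < A.card) : False := by
  classical
  -- A' = A.erase x
  set A' := A.erase x with hA'
  have hdcA' : DC A' := by
    intro a ha b hb
    have haA : a ∈ A := mem_of_mem_erase ha
    have hbA : b ∈ A := hdc a haA b hb
    refine mem_erase.2 ⟨?_, hbA⟩
    rintro rfl
    rcases lt_or_eq_of_le hb with h | h
    · exact hxmax a haA h
    · exact (mem_erase.1 ha).1 h.symm
  have hA'lt : A'.card < A.card := card_erase_lt_of_mem hxA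
  have hIH1 : A'.card ≤ (A'.biUnion T).card := IH A' hA'lt hdcA'
  have hsub : A'.biUnion T ⊆ A.biUnion T :=
    biUnion_subset_biUnion_of_subset_left T (erase_subset _ _)
  have hA'card : A'.card + 1 = A.card := card_erase_add_one hxA
  have hEq : A'.biUnion T = A.biUnion T := by
    apply Finset.eq_of_subset_of_card_le hsub
    omega
  -- separator
  obtain ⟨g, hgx, hgy'⟩ := repr_sep hT hy'3
  have hgA : g ∈ A.biUnion T := mem_biUnion.2 ⟨x, hxA, hgx⟩
  rw [← hEq] at hgA
  obtain ⟨u₀, hu₀A', hgu₀⟩ := mem_biUnion.1 hgA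
  have hu₀A : u₀ ∈ A := mem_of_mem_erase hu₀A'
  have hu₀x : u₀ ≠ x := (mem_erase.1 hu₀A').1
  have hu₀y' : ¬ u₀ ≤ y' := fun h => hgy' (repr_mono hT h hgu₀)
  -- sets
  set Dx := downSet x with hDx
  set Du := downSet u₀ with hDu
  have hDxA : Dx ⊆ A := fun v hv => hdc x hxA v (mem_downSet.1 hv)
  have hDuA : Du ⊆ A := fun v hv => hdc u₀ hu₀A v (mem_downSet.1 hv)
  have hyB : y ∉ Dx ∪ Du := by
    intro hy
    rcases mem_union.1 hy with h | h
    · exact hyx (mem_downSet.1 h)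
    · have hyu : y ≤ u₀ := mem_downSet.1 h
      rcases lt_or_eq_of_le hyu with h' | h'
      · exact hymax u₀ hu₀A h'
      · exact hu₀y' (h' ▸ hy'2)
  have hBA : Dx ∪ Du ⊆ A := union_subset hDxA hDuA
  have hBlt : (Dx ∪ Du).card < A.card :=
    card_lt_card (Finset.ssubset_iff_of_subset hBA |>.2 ⟨y, hyA, hyB⟩)
  have hDxlt : Dx.card < A.card := lt_of_le_of_lt (card_le_card subset_union_left) hBlt
  have hDuln : Du.card < A.card := lt_of_le_of_lt (card_le_card subset_union_right) hBlt
  have hCclt : (Dx ∩ Du).card < A.card :=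
    lt_of_le_of_lt (card_le_card (inter_subset_union)) hBlt
  -- IH applications
  have hTx_ge : Dx.card ≤ (T x).card := by
    have := IH Dx hDxlt (dc_downSet x)
    rwa [biUnion_downSet hT] at this
  have hTx : (T x).card = Dx.card := le_antisymm (hcnt x) hTx_ge
  have hTu : (T u₀).card ≤ Du.card := hcnt u₀
  have hBU : (Dx ∪ Du).biUnion T = T x ∪ T u₀ := by
    apply Finset.Subset.antisymm
    · intro g' hg'
      obtain ⟨v, hv, hgv⟩ := mem_biUnion.1 hg'
      rcases mem_union.1 hv with h | h
      · exact mem_union_left _ (repr_mono hT (mem_downSet.1 h) hgv)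
      · exact mem_union_right _ (repr_mono hT (mem_downSet.1 h) hgv)
    · intro g' hg'
      rcases mem_union.1 hg' with h | h
      · exact mem_biUnion.2 ⟨x, mem_union_left _ (mem_downSet.2 le_rfl), h⟩
      · exact mem_biUnion.2 ⟨u₀, mem_union_right _ (mem_downSet.2 le_rfl), h⟩
  have hB : (Dx ∪ Du).card ≤ (T x ∪ T u₀).card := by
    have := IH _ hBlt (by
      intro a ha b hb
      rcases mem_union.1 ha with h | h
      · exact mem_union_left _ (mem_downSet.2 (hb.trans (mem_downSet.1 h)))
      · exact mem_union_right _ (mem_downSet.2 (hb.trans (mem_downSet.1 h))))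
    rwa [hBU] at this
  have hcard1 : (T x ∪ T u₀).card + (T x ∩ T u₀).card = (T x).card + (T u₀).card :=
    card_union_add_card_inter _ _
  have hcard2 : (Dx ∪ Du).card + (Dx ∩ Du).card = Dx.card + Du.card :=
    card_union_add_card_inter _ _
  have hint : (T x ∩ T u₀).card ≤ (Dx ∩ Du).card := by omega
  have hCcU : (Dx ∩ Du).biUnion T ⊆ T x ∩ T u₀ := by
    intro g' hg'
    obtain ⟨v, hv, hgv⟩ := mem_biUnion.1 hg'
    have h1 := mem_downSet.1 (mem_inter.1 hv).1
    have h2 := mem_downSet.1 (mem_inter.1 hv).2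
    exact mem_inter.2 ⟨repr_mono hT h1 hgv, repr_mono hT h2 hgv⟩
  have hCc : (Dx ∩ Du).card ≤ ((Dx ∩ Du).biUnion T).card := by
    refine IH _ hCclt ?_
    intro a ha b hb
    have h1 := mem_downSet.1 (mem_inter.1 ha).1
    have h2 := mem_downSet.1 (mem_inter.1 ha).2
    exact mem_inter.2 ⟨mem_downSet.2 (hb.trans h1), mem_downSet.2 (hb.trans h2)⟩
  have hEq2 : (Dx ∩ Du).biUnion T = T x ∩ T u₀ := by
    apply Finset.eq_of_subset_of_card_le hCcU
    omega
  have hgmem : g ∈ T x ∩ T u₀ := mem_inter.2 ⟨hgx, hgu₀⟩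
  rw [← hEq2] at hgmem
  obtain ⟨v, hv, hgv⟩ := mem_biUnion.1 hgmem
  have hvx : v ≤ x := mem_downSet.1 (mem_inter.1 hv).1
  have hvu : v ≤ u₀ := mem_downSet.1 (mem_inter.1 hv).2
  rcases lt_or_eq_of_le hvx with h | h
  · exact hgy' (repr_mono hT (hy'1 v h).le hgv)
  · subst h
    rcases lt_or_eq_of_le hvu with h' | h'
    · exact hxmax u₀ hu₀A h'
    · exact hu₀x h'.symm

lemma key (hN : NoBlockChain α) (hTD : TwoDown α) (hP : ParallelPair α)
    (hT : IsRepr T) (hcnt : ∀ x, (T x).card ≤ (downSet x).card) :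
    ∀ (n : ℕ) (A : Finset α), A.card ≤ n → DC A → A.card ≤ (A.biUnion T).card := by
  intro n
  induction n with
  | zero =>
    intro A hA _
    omega
  | succ n ih =>
    intro A hA hdc
    rcases A.eq_empty_or_nonempty with rfl | hAne
    · simp
    have IH : ∀ B : Finset α, B.card < A.card → DC B → B.card ≤ (B.biUnion T).card := by
      intro B hB hdcB
      exact ih B (by omega) hdcB
    obtain ⟨x, hxA, hxmax⟩ := A.exists_maximal hAne
    have hxmax : ∀ u ∈ A, ¬ x < u := fun u hu h => lt_irrefl _ (h.trans_le (hxmax hu h.le))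
    by_cases hall : ∀ u ∈ A, u ≤ x
    · -- A = downSet x
      have hAx : A = downSet x := by
        ext u
        exact ⟨fun hu => mem_downSet.2 (hall u hu), fun hu => hdc x hxA u (mem_downSet.1 hu)⟩
      have hbU : A.biUnion T = T x := by rw [hAx]; exact biUnion_downSet hT x
      set B := A.erase x with hB
      have hdcB : DC B := by
        intro a ha b hb
        have haA : a ∈ A := mem_of_mem_erase ha
        refine mem_erase.2 ⟨?_, hdc a haA b hb⟩
        rintro rfl
        exact (mem_erase.1 ha).1 (le_antisymm (hall a haA) hb)
      have hBcard : B.card + 1 = A.card := card_erase_add_one hxA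
      have hBlt : B.card < A.card := by omega
      rcases B.eq_empty_or_nonempty with hBe | hBne
      · -- x minimal : use NBC
        have hA1 : A.card = 1 := by
          rw [← hBcard, hBe]; simp
        obtain ⟨w, hw1, _⟩ := hN x
        obtain ⟨g, hgx, _⟩ := repr_sep hT hw1
        have : 1 ≤ (T x).card := card_pos.2 ⟨g, hgx⟩
        rw [hbU]; omega
      · by_cases hmax : ∃ m ∈ B, ∀ u ∈ B, u ≤ m
        · obtain ⟨m, hmB, hm⟩ := hmax
          have hmA : m ∈ A := mem_of_mem_erase hmB
          have hmx : m ≤ x := hall m hmA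
          have hxm : ¬ x ≤ m := by
            intro h
            exact (mem_erase.1 hmB).1 (le_antisymm hmx h)
          obtain ⟨g, hgx, hgm⟩ := repr_sep hT hxm
          have hBm : B.biUnion T = T m := by
            apply Finset.Subset.antisymm
            · intro g' hg'
              obtain ⟨u, hu, hgu⟩ := mem_biUnion.1 hg'
              exact repr_mono hT (hm u hu) hgu
            · intro g' hg'
              exact mem_biUnion.2 ⟨m, hmB, hg'⟩
          have hIHB : B.card ≤ (T m).card := by
            have := IH B hBlt hdcB
            rwa [hBm] at this
          have hins : insert g (T m) ⊆ T x := by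
            intro g' hg'
            rcases mem_insert.1 hg' with rfl | h
            · exact hgx
            · exact repr_mono hT hmx h
          have : (T m).card + 1 ≤ (T x).card := by
            have h1 : (insert g (T m)).card = (T m).card + 1 := card_insert_of_notMem hgm
            have h2 := card_le_card hins
            omega
          rw [hbU]; omega
        · -- two covers : use TwoDown
          push_neg at hmax
          obtain ⟨a, haB, hamax⟩ := B.exists_maximal hBne
          have hamax : ∀ u ∈ B, ¬ a < u := fun u hu h => lt_irrefl _ (h.trans_le (hamax hu h.le))
          have haA : a ∈ A := mem_of_mem_erase haB
          have hax : a < x := lt_of_le_of_ne (hall a haA) (mem_erase.1 haB).1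
          have hcova : a ⋖ x := by
            refine ⟨hax, ?_⟩
            intro c hac hcx
            have hcA : c ∈ A := hdc x hxA c hcx.le
            have hcB : c ∈ B := mem_erase.2 ⟨ne_of_lt hcx, hcA⟩
            exact hamax c hcB hac
          obtain ⟨u, huB, hua⟩ := hmax a haB
          have hbsetne : (B.filter (fun w => u ≤ w)).Nonempty := ⟨u, mem_filter.2 ⟨huB, le_rfl⟩⟩
          obtain ⟨b, hbf, hbmax⟩ := (B.filter (fun w => u ≤ w)).exists_maximal hbsetne
          have hbmax : ∀ v ∈ B.filter (fun w => u ≤ w), ¬ b < v := fun v hv h => lt_irrefl _ (h.trans_le (hbmax hv h.le))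
          have hbB : b ∈ B := (mem_filter.1 hbf).1
          have hub : u ≤ b := (mem_filter.1 hbf).2
          have hbA : b ∈ A := mem_of_mem_erase hbB
          have hbx : b < x := lt_of_le_of_ne (hall b hbA) (mem_erase.1 hbB).1
          have hcovb : b ⋖ x := by
            refine ⟨hbx, ?_⟩
            intro c hbc hcx
            have hcA : c ∈ A := hdc x hxA c hcx.le
            have hcB : c ∈ B := mem_erase.2 ⟨ne_of_lt hcx, hcA⟩
            exact hbmax c (mem_filter.2 ⟨hcB, hub.trans hbc.le⟩) hbc
          have hba : b ≠ a := fun h => hua (h ▸ hub)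
          obtain ⟨z, hz1, hz2, _⟩ := hTD x ⟨a, b, hba.symm, hcova, hcovb⟩
          obtain ⟨g, hgx, hgz⟩ := repr_sep hT hz2
          have hgB : g ∉ B.biUnion T := by
            intro hg
            obtain ⟨u', hu', hgu'⟩ := mem_biUnion.1 hg
            have : u' < x := lt_of_le_of_ne (hall u' (mem_of_mem_erase hu')) (mem_erase.1 hu').1
            exact hgz (repr_mono hT (hz1 u' this).le hgu')
          have hBsub : B.biUnion T ⊆ T x := by
            intro g' hg'
            obtain ⟨u', hu', hgu'⟩ := mem_biUnion.1 hg'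
            exact repr_mono hT (hall u' (mem_of_mem_erase hu')) hgu'
          have hins : insert g (B.biUnion T) ⊆ T x := by
            intro g' hg'
            rcases mem_insert.1 hg' with rfl | h
            · exact hgx
            · exact hBsub h
          have hIHB := IH B hBlt hdcB
          have h1 : (insert g (B.biUnion T)).card = (B.biUnion T).card + 1 :=
            card_insert_of_notMem hgB
          have h2 := card_le_card hins
          rw [hbU]; omega
    · -- at least two maximal elements
      push_neg at hall
      obtain ⟨u₁, hu₁A, hu₁x⟩ := hall
      have hfne : (A.filter (fun u => ¬ u ≤ x)).Nonempty := ⟨u₁, mem_filter.2 ⟨hu₁A, hu₁x⟩⟩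
      obtain ⟨y, hyf, hymaxf⟩ := (A.filter (fun u => ¬ u ≤ x)).exists_maximal hfne
      have hymaxf : ∀ v ∈ A.filter (fun u => ¬ u ≤ x), ¬ y < v := fun v hv h => lt_irrefl _ (h.trans_le (hymaxf hv h.le))
      have hyA : y ∈ A := (mem_filter.1 hyf).1
      have hyx : ¬ y ≤ x := (mem_filter.1 hyf).2
      have hymax : ∀ u ∈ A, ¬ y < u := by
        intro u hu hlt
        have hux : ¬ u ≤ x := fun h => hyx (hlt.le.trans h)
        exact hymaxf u (mem_filter.2 ⟨hu, hux⟩) hlt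
      have hxy : ¬ x ≤ y := by
        intro h
        rcases lt_or_eq_of_le h with h' | h'
        · exact hxmax y hyA h'
        · exact hyx (h' ▸ le_rfl)
      by_contra hcon
      push_neg at hcon
      rcases hP x y hxy hyx with ⟨y', h1, h2, h3, _⟩ | ⟨x', h1, h2, h3, _⟩
      · exact case2aux hP hT hcnt hdc IH hxA hyA hxmax hymax hyx h1 h2 h3 hcon
      · exact case2aux hP hT hcnt hdc IH hyA hxA hymax hxmax hxy h1 h2 h3 hcon

end Key

section B2

variable [Nonempty α]

lemma props_C_irr (hN : NoBlockChain α) (hTD : TwoDown α) (hP : ParallelPair α) :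
    IrreducibleRepr (C (α := α)) := by
  refine ⟨C_repr, ?_⟩
  intro T hT hred
  have hcnt : ∀ x, (T x).card ≤ (downSet x).card := by
    intro x
    have := hred.2 x
    rwa [C_card] at this
  have hkey := key hN hTD hP hT hcnt (Fintype.card α)
  constructor
  · -- ground
    have h1 : (Finset.univ : Finset α).card ≤ ((Finset.univ : Finset α).biUnion T).card :=
      hkey Finset.univ (by simp) (fun a _ b _ => mem_univ b)
    rw [ground_C_card, card_ground_nat]
    simpa [card_univ] using h1
  · intro x
    have h1 : (downSet x).card ≤ ((downSet x).biUnion T).card :=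
      hkey (downSet x) (card_le_card (subset_univ _) |>.trans (by simp)) (dc_downSet x)
    rw [biUnion_downSet hT] at h1
    rwa [C_card]

end B2

section B1

variable [Nonempty α]

/-- Dropping a "non-essential" element from the canonical representation. -/
lemma C_not_irr_of_nonessential {z : α}
    (hz : ∀ q, ¬ z ≤ q → ∃ m, m < z ∧ ¬ m ≤ q) :
    ¬ IrreducibleRepr (C (α := α)) := by
  intro hirr
  set Td : α → Finset ℕ := fun x => ((downSet x).erase z).image es with hTd
  have hrepr : IsRepr Td := by
    intro p q
    constructor
    · intro hpq
      apply image_subset_image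
      intro v hv
      exact mem_erase.2 ⟨(mem_erase.1 hv).1,
        mem_downSet.2 ((mem_downSet.1 (mem_erase.1 hv).2).trans hpq)⟩
    · intro hsub
      by_contra hpq
      by_cases hpz : p = z
      · subst hpz
        obtain ⟨m, hm1, hm2⟩ := hz q hpq
        have hmem : es m ∈ Td p := mem_image_of_mem _ (mem_erase.2 ⟨ne_of_lt hm1, mem_downSet.2 hm1.le⟩)
        have := hsub hmem
        obtain ⟨v, hv, hev⟩ := mem_image.1 this
        rw [es_inj hev] at hv
        exact hm2 (mem_downSet.1 (mem_erase.1 hv).2)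
      · have hmem : es p ∈ Td p := mem_image_of_mem _ (mem_erase.2 ⟨hpz, mem_downSet.2 le_rfl⟩)
        have := hsub hmem
        obtain ⟨v, hv, hev⟩ := mem_image.1 this
        rw [es_inj hev] at hv
        exact hpq (mem_downSet.1 (mem_erase.1 hv).2)
  have hgr : ground Td ⊆ ((Finset.univ : Finset α).erase z).image es := by
    intro g hg
    obtain ⟨x, hx⟩ := mem_ground_nat.1 hg
    obtain ⟨v, hv, hev⟩ := mem_image.1 hx
    exact mem_image.2 ⟨v, mem_erase.2 ⟨(mem_erase.1 hv).1, mem_univ v⟩, hev⟩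
  have hgrcard : (ground Td).card ≤ Fintype.card α - 1 := by
    have h1 := card_le_card hgr
    have h2 : (((Finset.univ : Finset α).erase z).image es).card = Fintype.card α - 1 := by
      rw [card_image_of_injective _ es_inj, card_erase_of_mem (mem_univ z), card_univ]
    omega
  have hpos : 1 ≤ Fintype.card α := Fintype.card_pos
  have hred : IsReduction Td (C (α := α)) := by
    constructor
    · rw [ground_C_card]; omega
    · intro x
      rw [C_card]
      exact le_trans (card_image_le) (card_le_card (erase_subset _ _))
  have := (hirr.2 Td hrepr hred).1
  rw [ground_C_card] at this
  omega

lemma C_not_irr_of_merge {a b : α} (hab : ¬ a ≤ b) (hba : ¬ b ≤ a)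
    (h1 : ∀ q, ¬ a ≤ q → b ≤ q → ∃ m, m < a ∧ ¬ m ≤ q)
    (h2 : ∀ q, ¬ b ≤ q → a ≤ q → ∃ m, m < b ∧ ¬ m ≤ q) :
    ¬ IrreducibleRepr (C (α := α)) := by
  intro hirr
  have hane : a ≠ b := fun h => hab (h ▸ le_rfl)
  set Tm : α → Finset ℕ := fun x =>
    (((downSet x).erase a).erase b).image es ∪
      (if a ≤ x ∨ b ≤ x then ({enc (none : Option α)} : Finset ℕ) else (∅ : Finset ℕ)) with hTm
  have hmemTm : ∀ x g, g ∈ Tm x ↔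
      (∃ v, (v ≠ b ∧ v ≠ a ∧ v ≤ x) ∧ es v = g) ∨ ((a ≤ x ∨ b ≤ x) ∧ g = enc (none : Option α)) := by
    intro x g
    rw [hTm]
    simp only [mem_union, mem_image, mem_erase, mem_downSet]
    rw [mem_if_singleton]
  have hrepr : IsRepr Tm := by
    intro p q
    constructor
    · intro hpq
      intro g hg
      rcases (hmemTm p g).1 hg with ⟨v, ⟨hvb, hva, hvp⟩, hev⟩ | ⟨hc, he⟩
      · exact (hmemTm q g).2 (Or.inl ⟨v, ⟨hvb, hva, hvp.trans hpq⟩, hev⟩)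
      · refine (hmemTm q g).2 (Or.inr ⟨?_, he⟩)
        rcases hc with h | h
        · exact Or.inl (h.trans hpq)
        · exact Or.inr (h.trans hpq)
    · intro hsub
      by_contra hpq
      by_cases hpa : p = a
      · subst hpa
        by_cases hbq : b ≤ q
        · obtain ⟨m, hm1, hm2⟩ := h1 q hpq hbq
          have hmb : m ≠ b := fun h => hm2 (h ▸ hbq)
          have hmem : es m ∈ Tm p :=
            (hmemTm p (es m)).2 (Or.inl ⟨m, ⟨hmb, ne_of_lt hm1, hm1.le⟩, rfl⟩)
          rcases (hmemTm q (es m)).1 (hsub hmem) with ⟨v, ⟨_, _, hvq⟩, hev⟩ | ⟨_, he⟩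
          · exact hm2 (es_inj hev ▸ hvq)
          · exact es_ne_none m he
        · have hmem : enc (none : Option α) ∈ Tm p :=
            (hmemTm p _).2 (Or.inr ⟨Or.inl le_rfl, rfl⟩)
          rcases (hmemTm q _).1 (hsub hmem) with ⟨v, _, hev⟩ | ⟨hc, _⟩
          · exact es_ne_none v hev
          · rcases hc with h | h
            · exact hpq h
            · exact hbq h
      · by_cases hpb : p = b
        · subst hpb
          by_cases haq : a ≤ q
          · obtain ⟨m, hm1, hm2⟩ := h2 q hpq haq
            have hma : m ≠ a := fun h => hm2 (h ▸ haq)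
            have hmem : es m ∈ Tm p :=
              (hmemTm p (es m)).2 (Or.inl ⟨m, ⟨ne_of_lt hm1, hma, hm1.le⟩, rfl⟩)
            rcases (hmemTm q (es m)).1 (hsub hmem) with ⟨v, ⟨_, _, hvq⟩, hev⟩ | ⟨_, he⟩
            · exact hm2 (es_inj hev ▸ hvq)
            · exact es_ne_none m he
          · have hmem : enc (none : Option α) ∈ Tm p :=
              (hmemTm p _).2 (Or.inr ⟨Or.inr le_rfl, rfl⟩)
            rcases (hmemTm q _).1 (hsub hmem) with ⟨v, _, hev⟩ | ⟨hc, _⟩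
            · exact es_ne_none v hev
            · rcases hc with h | h
              · exact haq h
              · exact hpq h
        · have hmem : es p ∈ Tm p :=
            (hmemTm p (es p)).2 (Or.inl ⟨p, ⟨hpb, hpa, le_rfl⟩, rfl⟩)
          rcases (hmemTm q (es p)).1 (hsub hmem) with ⟨v, ⟨_, _, hvq⟩, hev⟩ | ⟨_, he⟩
          · exact hpq (es_inj hev ▸ hvq)
          · exact es_ne_none p he
  -- ground bound
  have hgr : ground Tm ⊆
      insert (enc (none : Option α)) ((((Finset.univ : Finset α).erase a).erase b).image es) := by
    intro g hg
    obtain ⟨x, hx⟩ := mem_ground_nat.1 hg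
    rcases (hmemTm x g).1 hx with ⟨v, ⟨hvb, hva, _⟩, hev⟩ | ⟨_, he⟩
    · exact mem_insert.2 (Or.inr (mem_image.2 ⟨v, mem_erase.2 ⟨hvb, mem_erase.2 ⟨hva, mem_univ v⟩⟩, hev⟩))
    · exact mem_insert.2 (Or.inl he)
  have hcard2 : 2 ≤ Fintype.card α := by
    have : ({a, b} : Finset α).card = 2 := card_pair hane
    have h := card_le_card ({a, b} : Finset α).subset_univ
    rw [this, card_univ] at h
    exact h
  have hgrcard : (ground Tm).card ≤ Fintype.card α - 1 := by
    have h1 := card_le_card hgr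
    have hbmem : b ∈ (Finset.univ : Finset α).erase a := mem_erase.2 ⟨hane.symm, mem_univ b⟩
    have h2 : ((((Finset.univ : Finset α).erase a).erase b).image es).card = Fintype.card α - 2 := by
      rw [card_image_of_injective _ es_inj, card_erase_of_mem hbmem,
        card_erase_of_mem (mem_univ a), card_univ]
      omega
    have h3 := card_insert_le (enc (none : Option α))
      ((((Finset.univ : Finset α).erase a).erase b).image es)
    omega
  have hred : IsReduction Tm (C (α := α)) := by
    constructor
    · rw [ground_C_card]; omega
    · intro x
      rw [C_card]
      have hbase : (Tm x).card ≤ ((((downSet x).erase a).erase b).image es).card +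
          (if a ≤ x ∨ b ≤ x then ({enc (none : Option α)} : Finset ℕ) else ∅).card :=
        card_union_le _ _
      by_cases hc : a ≤ x ∨ b ≤ x
      · have hone : (if a ≤ x ∨ b ≤ x then ({enc (none : Option α)} : Finset ℕ) else ∅).card = 1 := by
          rw [if_pos hc]; simp
        have hdrop : (((downSet x).erase a).erase b).card + 1 ≤ (downSet x).card := by
          rcases hc with h | h
          · have hmem : a ∈ downSet x := mem_downSet.2 h
            have e1 : ((downSet x).erase a).card + 1 = (downSet x).card := card_erase_add_one hmem
            have e2 := card_le_card (erase_subset b ((downSet x).erase a))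
            omega
          · have hmem : b ∈ (downSet x).erase a := mem_erase.2 ⟨fun hh => hane hh.symm, mem_downSet.2 h⟩
            have e1 : (((downSet x).erase a).erase b).card + 1 = ((downSet x).erase a).card :=
              card_erase_add_one hmem
            have e2 := card_le_card (erase_subset a (downSet x))
            omega
        have himg := card_image_le (s := ((downSet x).erase a).erase b) (f := es)
        omega
      · have hzero : (if a ≤ x ∨ b ≤ x then ({enc (none : Option α)} : Finset ℕ) else ∅).card = 0 := by
          rw [if_neg hc]; simp
        have himg := card_image_le (s := ((downSet x).erase a).erase b) (f := es)
        have := card_le_card ((erase_subset b ((downSet x).erase a)).trans (erase_subset a (downSet x)))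
        omega
  have := (hirr.2 Tm hrepr hred).1
  rw [ground_C_card] at this
  omega

/-- Failure of NoBlockChain yields a non-essential element. -/
lemma nonessential_of_not_NBC (h : ¬ NoBlockChain α) :
    ∃ z : α, ∀ q, ¬ z ≤ q → ∃ m, m < z ∧ ¬ m ≤ q := by
  simp only [NoBlockChain, not_forall, not_exists, not_and_or, not_not] at h
  obtain ⟨x₀, hx₀⟩ := h
  have hx₀' : ∀ w, x₀ ≤ w ∨ w ≤ x₀ := hx₀
  set Ts : Finset α := Finset.univ.filter (fun t => ∀ w, t ≤ w ∨ w ≤ t) with hTs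
  have hTsne : Ts.Nonempty := ⟨x₀, mem_filter.2 ⟨mem_univ _, hx₀'⟩⟩
  obtain ⟨z, hzTs, hzmin⟩ := Ts.exists_minimal hTsne
  have hzmin : ∀ v ∈ Ts, ¬ v < z := fun v hv h => lt_irrefl _ (h.trans_le (hzmin hv h.le))
  have hzcomp : ∀ w, z ≤ w ∨ w ≤ z := (mem_filter.1 hzTs).2
  refine ⟨z, ?_⟩
  intro q hq
  by_contra hcl
  push_neg at hcl
  have hql : ∀ m, m < z → m ≤ q := by
    intro m hm
    by_contra hmq
    exact hmq (by_contra fun hh => hh (hcl m hm))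
  have hqz : q < z := by
    rcases hzcomp q with h | h
    · exact absurd h hq
    · exact lt_of_le_of_ne h (fun hh => hq (hh ▸ le_rfl))
  have hqTs : q ∈ Ts := by
    refine mem_filter.2 ⟨mem_univ _, ?_⟩
    intro w
    rcases hzcomp w with h | h
    · exact Or.inl (hqz.le.trans h)
    · rcases lt_or_eq_of_le h with h' | h'
      · exact Or.inr (hql w h')
      · exact Or.inl (h' ▸ hqz.le)
  exact hzmin q hqTs hqz

lemma nonessential_of_not_TD (h : ¬ TwoDown α) :
    ∃ z : α, ∀ q, ¬ z ≤ q → ∃ m, m < z ∧ ¬ m ≤ q := by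
  simp only [TwoDown, not_forall] at h
  obtain ⟨y₀, hcov, hfail⟩ := h
  obtain ⟨a, b, hab, ha, hb⟩ := hcov
  push_neg at hfail
  refine ⟨y₀, ?_⟩
  intro q hq
  by_contra hcl
  push_neg at hcl
  have hql : ∀ m, m < y₀ → m ≤ q := by
    intro m hm
    by_contra hmq
    exact hmq (by_contra fun hh => hh (hcl m hm))
  have hnq : ¬ q < y₀ := by
    intro hqy
    have haq : a ≤ q := hql a ha.1
    have haq' : a = q := by
      rcases lt_or_eq_of_le haq with h' | h'
      · exact absurd hqy (ha.2 h')
      · exact h'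
    have hbq : b ≤ q := hql b hb.1
    have hbq' : b = q := by
      rcases lt_or_eq_of_le hbq with h' | h'
      · exact absurd hqy (hb.2 h')
      · exact h'
    exact hab (haq'.trans hbq'.symm)
  have hstep : ∀ u, u < y₀ → u < q := by
    intro u hu
    rcases lt_or_eq_of_le (hql u hu) with h' | h'
    · exact h'
    · exact absurd (h' ▸ hu) hnq
  have h' := hfail q hstep hq
  exact hnq (lt_of_le_of_ne h' (fun hh => hq (hh ▸ le_rfl)))

lemma merge_of_not_PP (h : ¬ ParallelPair α) :
    ∃ a b : α, (¬ a ≤ b) ∧ (¬ b ≤ a) ∧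
      (∀ q, ¬ a ≤ q → b ≤ q → ∃ m, m < a ∧ ¬ m ≤ q) ∧
      (∀ q, ¬ b ≤ q → a ≤ q → ∃ m, m < b ∧ ¬ m ≤ q) := by
  simp only [ParallelPair, not_forall] at h
  obtain ⟨x, y, hxy, hyx, hfail⟩ := h
  push_neg at hfail
  obtain ⟨hf1, hf2⟩ := hfail
  refine ⟨x, y, hxy, hyx, ?_, ?_⟩
  · intro q hq hyq
    by_contra hcl
    push_neg at hcl
    have hql : ∀ m, m < x → m ≤ q := by
      intro m hm
      by_contra hmq
      exact hmq (by_contra fun hh => hh (hcl m hm))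
    have hstep : ∀ u, u < x → u < q := by
      intro u hu
      rcases lt_or_eq_of_le (hql u hu) with h' | h'
      · exact h'
      · subst h'
        exact absurd (hyq.trans hu.le) hyx
    have hqx : ¬ q ≤ x := fun hh => hyx (hyq.trans hh)
    exact hqx (hf1 q hstep hyq hq)
  · intro q hq hxq
    by_contra hcl
    push_neg at hcl
    have hql : ∀ m, m < y → m ≤ q := by
      intro m hm
      by_contra hmq
      exact hmq (by_contra fun hh => hh (hcl m hm))
    have hstep : ∀ u, u < y → u < q := by
      intro u hu
      rcases lt_or_eq_of_le (hql u hu) with h' | h'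
      · exact h'
      · subst h'
        exact absurd (hxq.trans hu.le) hxy
    have hqy : ¬ q ≤ y := fun hh => hxy (hxq.trans hh)
    exact hqy (hf2 q hstep hxq hq)

lemma props_of_C_irr (hirr : IrreducibleRepr (C (α := α))) :
    NoBlockChain α ∧ TwoDown α ∧ ParallelPair α := by
  refine ⟨?_, ?_, ?_⟩
  · by_contra h
    obtain ⟨z, hz⟩ := nonessential_of_not_NBC h
    exact C_not_irr_of_nonessential hz hirr
  · by_contra h
    obtain ⟨z, hz⟩ := nonessential_of_not_TD h
    exact C_not_irr_of_nonessential hz hirr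
  · by_contra h
    obtain ⟨a, b, h1, h2, h3, h4⟩ := merge_of_not_PP h
    exact C_not_irr_of_merge h1 h2 h3 h4 hirr

end B1

section Fam

noncomputable def encF : Finset α → ℕ := (Countable.exists_injective_nat (Finset α)).choose

lemma encF_inj : Function.Injective (encF (α := α)) :=
  (Countable.exists_injective_nat (Finset α)).choose_spec

noncomputable def famT (F : Finset (Finset α)) : α → Finset ℕ :=
  fun x => (F.filter (fun W => x ∈ W)).image encF

lemma famT_repr {F : Finset (Finset α)}
    (hup : ∀ W ∈ F, ∀ p q : α, p ∈ W → p ≤ q → q ∈ W)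
    (hsep : ∀ x y : α, ¬ x ≤ y → ∃ W ∈ F, x ∈ W ∧ y ∉ W) : IsRepr (famT F) := by
  intro x y
  constructor
  · intro hxy
    apply image_subset_image
    intro W hW
    exact mem_filter.2 ⟨(mem_filter.1 hW).1, hup W (mem_filter.1 hW).1 x y (mem_filter.1 hW).2 hxy⟩
  · intro hsub
    by_contra hxy
    obtain ⟨W, hWF, hxW, hyW⟩ := hsep x y hxy
    have h1 : encF W ∈ famT F x := mem_image_of_mem _ (mem_filter.2 ⟨hWF, hxW⟩)
    obtain ⟨W', hW', he⟩ := mem_image.1 (hsub h1)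
    have hyW' : y ∈ W' := (mem_filter.1 hW').2
    rw [encF_inj he] at hyW'
    exact hyW hyW'

lemma famT_ground {F : Finset (Finset α)} (hne : ∀ W ∈ F, W.Nonempty) :
    (ground (famT F)).card = F.card := by
  have hg : ground (famT F) = F.image encF := by
    ext g
    rw [mem_ground_nat]
    constructor
    · rintro ⟨x, hx⟩
      obtain ⟨W, hW, he⟩ := mem_image.1 hx
      exact mem_image.2 ⟨W, (mem_filter.1 hW).1, he⟩
    · rintro hW
      obtain ⟨W, hWF, he⟩ := mem_image.1 hW
      obtain ⟨x₀, hx₀⟩ := hne W hWF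
      exact ⟨x₀, he ▸ mem_image_of_mem _ (mem_filter.2 ⟨hWF, hx₀⟩)⟩
  rw [hg, card_image_of_injective _ encF_inj]

lemma famT_card_le (F : Finset (Finset α)) (x : α) :
    (famT F x).card ≤ (F.filter (fun W => x ∈ W)).card := card_image_le

noncomputable def Upat (S : α → Finset ℕ) (g : ℕ) : Finset α :=
  Finset.univ.filter (fun x => g ∈ S x)

noncomputable def pats (S : α → Finset ℕ) : Finset (Finset α) := (ground S).image (Upat S)

variable {S : α → Finset ℕ}

lemma pats_up (hS : IsRepr S) : ∀ W ∈ pats S, ∀ p q : α, p ∈ W → p ≤ q → q ∈ W := by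
  intro W hW p q hp hpq
  obtain ⟨g, _, rfl⟩ := mem_image.1 hW
  have : g ∈ S p := (mem_filter.1 hp).2
  exact mem_filter.2 ⟨mem_univ _, repr_mono hS hpq this⟩

lemma pats_sep (hS : IsRepr S) : ∀ x y : α, ¬ x ≤ y → ∃ W ∈ pats S, x ∈ W ∧ y ∉ W := by
  intro x y hxy
  obtain ⟨g, hgx, hgy⟩ := repr_sep hS hxy
  refine ⟨Upat S g, mem_image_of_mem _ (mem_ground_nat.2 ⟨x, hgx⟩), ?_, ?_⟩
  · exact mem_filter.2 ⟨mem_univ _, hgx⟩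
  · intro h
    exact hgy (mem_filter.1 h).2

lemma pats_ne : ∀ W ∈ pats S, W.Nonempty := by
  intro W hW
  obtain ⟨g, hg, rfl⟩ := mem_image.1 hW
  obtain ⟨x, hx⟩ := mem_ground_nat.1 hg
  exact ⟨x, mem_filter.2 ⟨mem_univ _, hx⟩⟩

lemma pats_cnt (x : α) : ((pats S).filter (fun W => x ∈ W)).card ≤ (S x).card := by
  have h1 : (pats S).filter (fun W => x ∈ W) =
      ((ground S).filter (fun g => x ∈ Upat S g)).image (Upat S) := by
    rw [pats, Finset.filter_image]
  have h2 : (ground S).filter (fun g => x ∈ Upat S g) = S x := by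
    ext g
    simp only [mem_filter, Upat, mem_univ, true_and, mem_ground_nat]
    exact ⟨fun h => h.2, fun h => ⟨⟨x, h⟩, h⟩⟩
  calc ((pats S).filter (fun W => x ∈ W)).card
      ≤ ((ground S).filter (fun g => x ∈ Upat S g)).card := h1 ▸ card_image_le
    _ = (S x).card := by rw [h2]

lemma pats_card_le : (pats S).card ≤ (ground S).card := card_image_le

noncomputable def mins (W : Finset α) : Finset α := W.filter (fun m => ∀ w ∈ W, ¬ w < m)

noncomputable def MU (G : Finset (Finset α)) : Finset α := G.biUnion mins

lemma exists_min_le {W : Finset α} {x : α} (hx : x ∈ W) : ∃ m ∈ mins W, m ≤ x := by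
  have hne : (W.filter (· ≤ x)).Nonempty := ⟨x, mem_filter.2 ⟨hx, le_rfl⟩⟩
  obtain ⟨m, hm, hmmin⟩ := (W.filter (· ≤ x)).exists_minimal hne
  have hmmin : ∀ v ∈ W.filter (· ≤ x), ¬ v < m := fun v hv h => lt_irrefl _ (h.trans_le (hmmin hv h.le))
  refine ⟨m, mem_filter.2 ⟨(mem_filter.1 hm).1, ?_⟩, (mem_filter.1 hm).2⟩
  intro w hw hwm
  exact hmmin w (mem_filter.2 ⟨hw, hwm.le.trans (mem_filter.1 hm).2⟩) hwm

lemma mins_subset (W : Finset α) : mins W ⊆ W := filter_subset _ _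

lemma MU_mono {G G' : Finset (Finset α)} (h : G' ⊆ G) : MU G' ⊆ MU G := by
  intro m hm
  obtain ⟨W, hW, hmW⟩ := mem_biUnion.1 hm
  exact mem_biUnion.2 ⟨W, h hW, hmW⟩

lemma red_of_violation (hS : IsRepr S)
    (hviol : ∃ G, G ⊆ pats S ∧ (MU G).card < G.card) :
    ∃ T : α → Finset ℕ, IsRepr T ∧ (∀ x, (T x).card ≤ (S x).card) ∧
      (ground T).card < (pats S).card := by
  classical
  set P : ℕ → Prop := fun k => ∃ G, G ⊆ pats S ∧ G.card = k ∧ (MU G).card < k with hPdef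
  have hPex : ∃ k, P k := by
    obtain ⟨G, hG1, hG2⟩ := hviol
    exact ⟨G.card, G, hG1, rfl, hG2⟩
  obtain ⟨G, hGsub, hGcard, hGlt⟩ := Nat.find_spec hPex
  have hmin : ∀ G' : Finset (Finset α), G' ⊆ pats S → G'.card < Nat.find hPex →
      G'.card ≤ (MU G').card := by
    intro G' hsub hlt
    by_contra hcon
    push_neg at hcon
    exact absurd (⟨G', hsub, rfl, hcon⟩ : P G'.card) (Nat.find_min hPex hlt)
  set F' : Finset (Finset α) := (pats S \ G) ∪ (MU G).image (fun m => Finset.univ.filter (m ≤ ·))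
    with hF'
  -- properties of F'
  have hup' : ∀ W ∈ F', ∀ p q : α, p ∈ W → p ≤ q → q ∈ W := by
    intro W hW p q hp hpq
    rcases mem_union.1 hW with h | h
    · exact pats_up hS W (sdiff_subset h) p q hp hpq
    · obtain ⟨m, _, rfl⟩ := mem_image.1 h
      exact mem_filter.2 ⟨mem_univ _, (mem_filter.1 hp).2.trans hpq⟩
  have hne' : ∀ W ∈ F', W.Nonempty := by
    intro W hW
    rcases mem_union.1 hW with h | h
    · exact pats_ne W (sdiff_subset h)
    · obtain ⟨m, _, rfl⟩ := mem_image.1 h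
      exact ⟨m, mem_filter.2 ⟨mem_univ _, le_rfl⟩⟩
  have hsep' : ∀ x y : α, ¬ x ≤ y → ∃ W ∈ F', x ∈ W ∧ y ∉ W := by
    intro x y hxy
    obtain ⟨W, hWF, hxW, hyW⟩ := pats_sep hS x y hxy
    by_cases hWG : W ∈ G
    · obtain ⟨m, hm, hmx⟩ := exists_min_le hxW
      refine ⟨Finset.univ.filter (m ≤ ·), ?_, ?_, ?_⟩
      · exact mem_union_right _ (mem_image_of_mem _ (mem_biUnion.2 ⟨W, hWG, hm⟩))
      · exact mem_filter.2 ⟨mem_univ _, hmx⟩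
      · intro hy
        exact hyW (pats_up hS W hWF m y (mins_subset W hm) (mem_filter.1 hy).2)
    · exact ⟨W, mem_union_left _ (mem_sdiff.2 ⟨hWF, hWG⟩), hxW, hyW⟩
  -- cardinality of F'
  have hF'card : F'.card < (pats S).card := by
    have h1 : F'.card ≤ (pats S \ G).card + ((MU G).image (fun m => Finset.univ.filter (m ≤ ·))).card :=
      card_union_le _ _
    have h2 : ((MU G).image (fun m => Finset.univ.filter (m ≤ ·))).card ≤ (MU G).card :=
      card_image_le
    have h3 : (pats S \ G).card + G.card = (pats S).card := card_sdiff_add_card_eq_card hGsub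
    omega
  -- counts
  have hcnt' : ∀ x, (famT F' x).card ≤ (S x).card := by
    intro x
    have hk : ((MU G).filter (fun m => m ≤ x)).card ≤ (G.filter (fun W => x ∈ W)).card := by
      by_cases ht : (G.filter (fun W => x ∈ W)).card = 0
      · have : (MU G).filter (fun m => m ≤ x) = ∅ := by
          rw [filter_eq_empty_iff]
          intro m hm hmx
          obtain ⟨W, hWG, hmW⟩ := mem_biUnion.1 hm
          have hxW : x ∈ W := pats_up hS W (hGsub hWG) m x (mins_subset W hmW) hmx
          have : W ∈ G.filter (fun W => x ∈ W) := mem_filter.2 ⟨hWG, hxW⟩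
          rw [card_eq_zero] at ht
          simp [ht] at this
        rw [this]
        simp
      · set G' := G.filter (fun W => x ∉ W) with hG'
        have hpart : (G.filter (fun W => x ∈ W)).card + G'.card = G.card := by
          rw [hG']
          exact card_filter_add_card_filter_not _
        have hG'lt : G'.card < Nat.find hPex := by
          rw [← hGcard]
          omega
        have hG'hall : G'.card ≤ (MU G').card :=
          hmin G' ((filter_subset _ _).trans hGsub) hG'lt
        have hMU' : MU G' ⊆ (MU G).filter (fun m => ¬ m ≤ x) := by
          intro m hm
          obtain ⟨W, hWG', hmW⟩ := mem_biUnion.1 hm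
          refine mem_filter.2 ⟨MU_mono (filter_subset _ _) hm, ?_⟩
          intro hmx
          exact (mem_filter.1 hWG').2
            (pats_up hS W (hGsub (mem_filter.1 hWG').1) m x (mins_subset W hmW) hmx)
        have hMUpart : ((MU G).filter (fun m => m ≤ x)).card +
            ((MU G).filter (fun m => ¬ m ≤ x)).card = (MU G).card :=
          card_filter_add_card_filter_not _
        have h5 := card_le_card hMU'
        omega
    have hsplit : (F'.filter (fun W => x ∈ W)).card ≤
        ((pats S \ G).filter (fun W => x ∈ W)).card + ((MU G).filter (fun m => m ≤ x)).card := by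
      have h1 : F'.filter (fun W => x ∈ W) =
          ((pats S \ G).filter (fun W => x ∈ W)) ∪
          (((MU G).image (fun m => Finset.univ.filter (m ≤ ·))).filter (fun W => x ∈ W)) := by
        rw [hF', filter_union]
      have h2 : (((MU G).image (fun m => Finset.univ.filter (m ≤ ·))).filter (fun W => x ∈ W)).card
          ≤ ((MU G).filter (fun m => m ≤ x)).card := by
        rw [Finset.filter_image]
        refine le_trans card_image_le (card_le_card ?_)
        intro m hm
        have := (mem_filter.1 hm).2
        exact mem_filter.2 ⟨(mem_filter.1 hm).1, (mem_filter.1 this).2⟩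
      calc (F'.filter (fun W => x ∈ W)).card
          ≤ ((pats S \ G).filter (fun W => x ∈ W)).card +
            (((MU G).image (fun m => Finset.univ.filter (m ≤ ·))).filter (fun W => x ∈ W)).card := by
            rw [h1]; exact card_union_le _ _
        _ ≤ _ := by omega
    have hpartF : ((pats S \ G).filter (fun W => x ∈ W)).card + (G.filter (fun W => x ∈ W)).card
        = ((pats S).filter (fun W => x ∈ W)).card := by
      have hdisj : Disjoint ((pats S \ G).filter (fun W => x ∈ W)) (G.filter (fun W => x ∈ W)) :=
        disjoint_filter_filter sdiff_disjoint
      rw [← card_union_of_disjoint hdisj, ← filter_union, sdiff_union_of_subset hGsub]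
    have := pats_cnt (S := S) x
    have := famT_card_le F' x
    omega
  exact ⟨famT F', famT_repr hup' hsep', hcnt', by rw [famT_ground hne']; exact hF'card⟩

lemma irr_hall (hirr : IrreducibleRepr S) :
    ∀ G, G ⊆ pats S → G.card ≤ (MU G).card := by
  intro G hG
  by_contra hcon
  push_neg at hcon
  obtain ⟨T, hT, hcnt, hlt⟩ := red_of_violation hirr.1 ⟨G, hG, hcon⟩
  have hlt' : (ground T).card < (ground S).card := lt_of_lt_of_le hlt pats_card_le
  have hred : IsReduction T S := ⟨hlt'.le, hcnt⟩
  have := (hirr.2 T hT hred).1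
  omega

lemma irr_pats_card (hirr : IrreducibleRepr S) : (pats S).card = (ground S).card := by
  refine le_antisymm pats_card_le ?_
  by_contra hcon
  push_neg at hcon
  have hT := famT_repr (pats_up hirr.1) (pats_sep hirr.1)
  have hgr : (ground (famT (pats S))).card = (pats S).card := famT_ground pats_ne
  have hred : IsReduction (famT (pats S)) S := by
    refine ⟨?_, ?_⟩
    · rw [hgr]; omega
    · intro x
      exact le_trans (famT_card_le _ x) (pats_cnt x)
  have := (hirr.2 _ hT hred).1
  omega

lemma irr_ground_le (hirr : IrreducibleRepr S) : (ground S).card ≤ Fintype.card α := by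
  have h1 := irr_hall hirr (pats S) (Finset.Subset.refl _)
  have h2 : (MU (pats S)).card ≤ Fintype.card α := by
    rw [← card_univ]
    exact card_le_card (subset_univ _)
  have := irr_pats_card hirr
  omega

lemma irr_full_counts (hirr : IrreducibleRepr S)
    (hfull : (ground S).card = Fintype.card α) :
    ∀ x, (downSet x).card ≤ (S x).card := by
  intro x
  set G' := (pats S).filter (fun W => x ∉ W) with hG'
  have hhall : G'.card ≤ (MU G').card := irr_hall hirr G' (filter_subset _ _)
  have hMU' : MU G' ⊆ Finset.univ.filter (fun m => ¬ m ≤ x) := by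
    intro m hm
    obtain ⟨W, hWG', hmW⟩ := mem_biUnion.1 hm
    refine mem_filter.2 ⟨mem_univ _, ?_⟩
    intro hmx
    exact (mem_filter.1 hWG').2
      (pats_up hirr.1 W (mem_filter.1 hWG').1 m x (mins_subset W hmW) hmx)
  have hcompl : (downSet x).card + (Finset.univ.filter (fun m => ¬ m ≤ x)).card
      = Fintype.card α := by
    rw [← card_univ (α := α)]
    exact card_filter_add_card_filter_not _
  have hpart : ((pats S).filter (fun W => x ∈ W)).card + G'.card = (pats S).card := by
    rw [hG']
    exact card_filter_add_card_filter_not _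
  have h5 := card_le_card hMU'
  have h6 := pats_cnt (S := S) x
  have h7 := irr_pats_card hirr
  omega

lemma C_irr_of_exists [Nonempty α]
    (h : ∃ S : α → Finset ℕ, IrreducibleRepr S ∧ (ground S).card = Fintype.card α) :
    IrreducibleRepr (C (α := α)) := by
  obtain ⟨S, hirr, hfull⟩ := h
  have hCS : IsReduction (C (α := α)) S := by
    refine ⟨?_, ?_⟩
    · rw [ground_C_card, hfull]
    · intro x
      rw [C_card]
      exact irr_full_counts hirr hfull x
  have hSC := hirr.2 _ C_repr hCS
  have heg : (ground S).card = (ground (C (α := α))).card := le_antisymm hSC.1 hCS.1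
  have hec : ∀ x, (S x).card = (C (α := α) x).card := fun x => le_antisymm (hSC.2 x) (hCS.2 x)
  refine ⟨C_repr, ?_⟩
  intro T hT hred
  have hTS : IsReduction T S := ⟨hred.1.trans heg.ge, fun x => (hred.2 x).trans (hec x).ge⟩
  have hST := hirr.2 T hT hTS
  exact ⟨heg ▸ hST.1, fun x => (hec x).symm ▸ hST.2 x⟩

lemma exists_irr [Nonempty α] : ∃ S : α → Finset ℕ, IrreducibleRepr S := by
  classical
  set w : (α → Finset ℕ) → ℕ := fun S => (ground S).card + ∑ x, (S x).card with hw
  set V : Set ℕ := {k | ∃ S : α → Finset ℕ, IsRepr S ∧ w S = k} with hV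
  have hVne : V.Nonempty := ⟨w (C (α := α)), C (α := α), C_repr, rfl⟩
  obtain ⟨S₀, hS₀, hwS₀⟩ := Nat.sInf_mem hVne
  refine ⟨S₀, hS₀, ?_⟩
  intro T hT hred
  have hwT : sInf V ≤ w T := Nat.sInf_le ⟨T, hT, rfl⟩
  have hsum : ∑ x, (T x).card ≤ ∑ x, (S₀ x).card :=
    Finset.sum_le_sum (fun x _ => hred.2 x)
  have hwle : w T ≤ w S₀ := by
    have := hred.1
    simp only [hw]
    omega
  have heq : w T = w S₀ := le_antisymm hwle (hwS₀ ▸ hwT)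
  have hsum_eq : ∑ x, (T x).card = ∑ x, (S₀ x).card := by
    have := hred.1
    simp only [hw] at heq
    omega
  have hground_eq : (ground T).card = (ground S₀).card := by
    simp only [hw] at heq
    omega
  refine ⟨hground_eq.ge, ?_⟩
  intro x
  by_contra hcon
  push_neg at hcon
  have : ∑ x, (T x).card < ∑ x, (S₀ x).card :=
    Finset.sum_lt_sum (fun i _ => hred.2 i) ⟨x, mem_univ x, hcon⟩
  omega

end Fam

end IirAux

/-- `iir P = |P|` iff `P` satisfies the No Block is a Chain Property,
the Two Down Property, and the Parallel Pair Property. -/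
theorem iir_eq_card_iff_three_properties (α : Type) [PartialOrder α] [Fintype α]
    [Nonempty α] :
    iir α = Fintype.card α ↔ NoBlockChain α ∧ TwoDown α ∧ ParallelPair α := by
  classical
  set W : Set ℕ := {w | ∃ S : α → Finset ℕ, IrreducibleRepr S ∧ (ground S).card = w} with hW
  have hWne : W.Nonempty := by
    obtain ⟨S, hS⟩ := IirAux.exists_irr (α := α)
    exact ⟨(ground S).card, S, hS, rfl⟩
  have hWbd : ∀ w ∈ W, w ≤ Fintype.card α := by
    rintro w ⟨S, hS, rfl⟩
    exact IirAux.irr_ground_le hS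
  have hWbdd : BddAbove W := ⟨Fintype.card α, fun w hw => hWbd w hw⟩
  constructor
  · intro h
    have hmem : Fintype.card α ∈ W := by
      have := Nat.sSup_mem hWne hWbdd
      rwa [show sSup W = Fintype.card α from h] at this
    obtain ⟨S, hS, hSc⟩ := hmem
    exact IirAux.props_of_C_irr (IirAux.C_irr_of_exists ⟨S, hS, hSc⟩)
  · rintro ⟨hN, hTD, hP⟩
    have hCirr := IirAux.props_C_irr hN hTD hP
    have hmem : Fintype.card α ∈ W := ⟨IirAux.C, hCirr, IirAux.ground_C_card⟩
    exact le_antisymm (csSup_le hWne hWbd) (le_csSup hWbdd hmem)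
end

section
/- For every finite poset P, if cw(P) = |P| then ch(P) = max{|D_P[x]| : x ∈ P}. -/
open scoped Classical

/-- if `cw P = |P|`, then `ch P = max { |D_P[x]| : x ∈ P }`. -/
theorem cw_eq_card_ch (α : Type) [PartialOrder α] [Fintype α] [Nonempty α]
    (hcw : cw α = Fintype.card α) :
    chHeight α = Finset.univ.sup (fun x : α => (downSet x).card) := by
  classical
  set n := Fintype.card α with hn
  have hnpos : 0 < n := Fintype.card_pos
  -- encoding of α into ℕ
  set enc : α → ℕ := fun x => ((Fintype.equivFin α) x : ℕ) with henc
  have hencinj : Function.Injective enc := by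
    intro a b hab
    have : (Fintype.equivFin α) a = (Fintype.equivFin α) b := Fin.ext hab
    exact (Fintype.equivFin α).injective this
  have hground : ∀ (S : α → Finset ℕ) (g : ℕ), g ∈ ground S ↔ ∃ y, g ∈ S y := by
    intro S g
    unfold ground
    simp [Finset.mem_biUnion]
  have hmemdown : ∀ x u : α, u ∈ downSet x ↔ u ≤ x := by
    intro x u
    simp [downSet]
  have hdownsub : ∀ x y : α, x ≤ y ↔ downSet x ⊆ downSet y := by
    intro x y
    constructor
    · intro hxy u hu
      rw [hmemdown] at hu ⊢
      exact le_trans hu hxy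
    · intro hsub
      have : x ∈ downSet y := hsub ((hmemdown x x).2 le_rfl)
      exact (hmemdown y x).1 this
  -- Part A : chHeight α ≤ M, via the canonical representation
  have hA : chHeight α ≤ Finset.univ.sup (fun x : α => (downSet x).card) := by
    apply Nat.sInf_le
    refine ⟨fun x => (downSet x).image enc, ?_, ?_⟩
    · intro x y
      rw [hdownsub]
      exact (Finset.image_subset_image_iff hencinj).symm
    · intro x
      rw [Finset.card_image_of_injective _ hencinj]
      exact Finset.le_sup (f := fun x : α => (downSet x).card) (Finset.mem_univ x)
  -- Part B : M ≤ chHeight α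
  -- the defining set of cw
  set W : Set ℕ :=
    {w | ∃ S : α → Finset ℕ, IsRepr S ∧ (ground S).card = w ∧ ∀ x, (S x).card ≤ chHeight α}
    with hWdef
  have hcw' : sInf W = n := hcw
  have hWne : W.Nonempty := by
    by_contra hcon
    rw [Set.not_nonempty_iff_eq_empty] at hcon
    rw [hcon, Nat.sInf_empty] at hcw'
    omega
  have hWlb : ∀ w ∈ W, n ≤ w := by
    intro w hw
    rw [← hcw']
    exact Nat.sInf_le hw
  obtain ⟨S₀, hrepr, hgr, hht⟩ : ∃ S : α → Finset ℕ,
      IsRepr S ∧ (ground S).card = n ∧ ∀ x, (S x).card ≤ chHeight α := by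
    have := Nat.sInf_mem hWne
    rw [hcw'] at this
    exact this
  have hmono : ∀ {u v : α}, u ≤ v → S₀ u ⊆ S₀ v := fun {u v} h => (hrepr u v).1 h
  -- biUnion over a downSet is just the set at the top
  have hbidown : ∀ y : α, (downSet y).biUnion S₀ = S₀ y := by
    intro y
    apply Finset.Subset.antisymm
    · intro g hg
      rw [Finset.mem_biUnion] at hg
      obtain ⟨u, hu, hgu⟩ := hg
      exact hmono ((hmemdown y u).1 hu) hgu
    · intro g hg
      rw [Finset.mem_biUnion]
      exact ⟨y, (hmemdown y y).2 le_rfl, hg⟩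
  -- Hall condition
  have hHall : ∀ A : Finset α, A.card ≤ (A.biUnion S₀).card := by
    by_contra hcon
    push_neg at hcon
    obtain ⟨A₀, hA₀⟩ := hcon
    -- lower closure of A₀
    set Abar : Finset α := Finset.univ.filter (fun v => ∃ a ∈ A₀, v ≤ a) with hAbar
    have hsubbar : A₀ ⊆ Abar := by
      intro a ha
      rw [hAbar, Finset.mem_filter]
      exact ⟨Finset.mem_univ a, a, ha, le_rfl⟩
    have hNbar : Abar.biUnion S₀ = A₀.biUnion S₀ := by
      apply Finset.Subset.antisymm
      · intro g hg
        rw [Finset.mem_biUnion] at hg ⊢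
        obtain ⟨v, hv, hgv⟩ := hg
        rw [hAbar, Finset.mem_filter] at hv
        obtain ⟨-, a, ha, hva⟩ := hv
        exact ⟨a, ha, hmono hva hgv⟩
      · intro g hg
        rw [Finset.mem_biUnion] at hg ⊢
        obtain ⟨a, ha, hga⟩ := hg
        exact ⟨a, hsubbar ha, hga⟩
    -- lower set predicate
    set P : Finset α → Prop := fun A => ∀ u v : α, u ≤ v → v ∈ A → u ∈ A with hP
    have hPbar : P Abar := by
      intro u v huv hv
      rw [hAbar, Finset.mem_filter] at hv ⊢
      obtain ⟨-, a, ha, hva⟩ := hv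
      exact ⟨Finset.mem_univ u, a, ha, le_trans huv hva⟩
    -- maximize the defect over lower sets
    set D : Finset (Finset α) := Finset.univ.filter P with hD
    have hDne : D.Nonempty := ⟨Abar, by rw [hD, Finset.mem_filter]; exact ⟨Finset.mem_univ _, hPbar⟩⟩
    obtain ⟨Astar, hAstarD, hmax⟩ :=
      Finset.exists_max_image D (fun A => (A.card : ℤ) - ((A.biUnion S₀).card : ℤ)) hDne
    have hPAstar : P Astar := by
      rw [hD, Finset.mem_filter] at hAstarD
      exact hAstarD.2
    set NA : Finset ℕ := Astar.biUnion S₀ with hNA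
    have hdef1 : 1 ≤ (Astar.card : ℤ) - (NA.card : ℤ) := by
      have h1 := hmax Abar (by rw [hD, Finset.mem_filter]; exact ⟨Finset.mem_univ _, hPbar⟩)
      have h2 : (A₀.card : ℤ) ≤ (Abar.card : ℤ) := by
        exact_mod_cast Finset.card_le_card hsubbar
      have h3 : ((Abar.biUnion S₀).card : ℤ) = ((A₀.biUnion S₀).card : ℤ) := by
        rw [hNbar]
      have h4 : ((A₀.biUnion S₀).card : ℤ) + 1 ≤ (A₀.card : ℤ) := by exact_mod_cast hA₀
      omega
    -- key inequality from maximality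
    have hkey : ∀ y : α, ((downSet y) \ Astar).card ≤ ((S₀ y) \ NA).card := by
      intro y
      have hlow : (Astar ∪ downSet y) ∈ D := by
        rw [hD, Finset.mem_filter]
        refine ⟨Finset.mem_univ _, ?_⟩
        intro u v huv hv
        rw [Finset.mem_union] at hv ⊢
        rcases hv with hv | hv
        · exact Or.inl (hPAstar u v huv hv)
        · exact Or.inr ((hmemdown y u).2 (le_trans huv ((hmemdown y v).1 hv)))
      have h5 := hmax _ hlow
      have hcard1 : (Astar ∪ downSet y).card = Astar.card + ((downSet y) \ Astar).card := by
        rw [← Finset.union_sdiff_self_eq_union]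
        exact Finset.card_union_of_disjoint Finset.disjoint_sdiff
      have hbu : (Astar ∪ downSet y).biUnion S₀ = NA ∪ S₀ y := by
        rw [hNA, ← hbidown y]
        ext g
        simp only [Finset.mem_biUnion, Finset.mem_union]
        constructor
        · rintro ⟨a, ha | ha, hga⟩
          · exact Or.inl ⟨a, ha, hga⟩
          · exact Or.inr ⟨a, ha, hga⟩
        · rintro (⟨a, ha, hga⟩ | ⟨a, ha, hga⟩)
          · exact ⟨a, Or.inl ha, hga⟩
          · exact ⟨a, Or.inr ha, hga⟩
      have hcard2 : (NA ∪ S₀ y).card = NA.card + ((S₀ y) \ NA).card := by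
        rw [← Finset.union_sdiff_self_eq_union]
        exact Finset.card_union_of_disjoint Finset.disjoint_sdiff
      rw [hcard1, hbu, hcard2] at h5
      push_cast at h5
      omega
    -- the reduced representation
    set T : α → Finset ℕ := fun y =>
      ((S₀ y ∩ NA).image (fun m => 2 * m)) ∪
        (((downSet y) \ Astar).image (fun u => 2 * enc u + 1)) with hT
    have hTrepr : IsRepr T := by
      intro x y
      constructor
      · intro hxy
        apply Finset.union_subset_union
        · exact Finset.image_subset_image (Finset.inter_subset_inter (hmono hxy) (le_refl NA))
        · apply Finset.image_subset_image
          apply Finset.sdiff_subset_sdiff _ (le_refl Astar)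
          exact (hdownsub x y).1 hxy
      · intro hsub
        by_cases hx : x ∈ Astar
        · -- even part carries S₀ x
          rw [hrepr]
          intro g hg
          have hgNA : g ∈ NA := by
            rw [hNA]
            exact Finset.subset_biUnion_of_mem S₀ hx hg
          have h2g : 2 * g ∈ T x := by
            rw [hT]
            apply Finset.mem_union_left
            rw [Finset.mem_image]
            exact ⟨g, Finset.mem_inter.2 ⟨hg, hgNA⟩, rfl⟩
          have h2gy := hsub h2g
          rw [hT, Finset.mem_union] at h2gy
          rcases h2gy with h | h
          · rw [Finset.mem_image] at h
            obtain ⟨m, hm, hmg⟩ := h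
            have : m = g := by omega
            rw [this] at hm
            exact (Finset.mem_inter.1 hm).1
          · rw [Finset.mem_image] at h
            obtain ⟨u, -, hu⟩ := h
            omega
        · -- odd marker of x
          have hxmem : x ∈ (downSet x) \ Astar :=
            Finset.mem_sdiff.2 ⟨(hmemdown x x).2 le_rfl, hx⟩
          have hodd : 2 * enc x + 1 ∈ T x := by
            rw [hT]
            apply Finset.mem_union_right
            rw [Finset.mem_image]
            exact ⟨x, hxmem, rfl⟩
          have h := hsub hodd
          rw [hT, Finset.mem_union] at h
          rcases h with h | h
          · rw [Finset.mem_image] at h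
            obtain ⟨m, -, hm⟩ := h
            omega
          · rw [Finset.mem_image] at h
            obtain ⟨u, hu, hux⟩ := h
            have : enc u = enc x := by omega
            have huxeq : u = x := hencinj this
            rw [huxeq] at hu
            exact (hmemdown y x).1 (Finset.mem_sdiff.1 hu).1
    have hTht : ∀ y, (T y).card ≤ chHeight α := by
      intro y
      have h1 : (T y).card ≤ (S₀ y ∩ NA).card + ((downSet y) \ Astar).card := by
        rw [hT]
        refine le_trans (Finset.card_union_le _ _) ?_
        exact Nat.add_le_add (Finset.card_image_le) (Finset.card_image_le)
      have h2 : (S₀ y ∩ NA).card + ((downSet y) \ Astar).card ≤ (S₀ y).card := by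
        have := hkey y
        have h3 := Finset.card_inter_add_card_sdiff (S₀ y) NA
        omega
      exact le_trans h1 (le_trans h2 (hht y))
    -- ground of T is small
    have hTgr : (ground T).card + 1 ≤ n := by
      have hsub2 : ground T ⊆
          (NA.image (fun m => 2 * m)) ∪
            ((Finset.univ \ Astar).image (fun u => 2 * enc u + 1)) := by
        intro g hg
        obtain ⟨y, hgy⟩ := (hground T g).1 hg
        rw [hT, Finset.mem_union] at hgy
        rcases hgy with h | h
        · apply Finset.mem_union_left
          rw [Finset.mem_image] at h ⊢
          obtain ⟨m, hm, hmg⟩ := h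
          exact ⟨m, (Finset.mem_inter.1 hm).2, hmg⟩
        · apply Finset.mem_union_right
          rw [Finset.mem_image] at h ⊢
          obtain ⟨u, hu, hug⟩ := h
          refine ⟨u, ?_, hug⟩
          rw [Finset.mem_sdiff]
          exact ⟨Finset.mem_univ u, (Finset.mem_sdiff.1 hu).2⟩
      have hc1 : (ground T).card ≤ NA.card + (Finset.univ \ Astar).card := by
        refine le_trans (Finset.card_le_card hsub2) ?_
        refine le_trans (Finset.card_union_le _ _) ?_
        exact Nat.add_le_add (Finset.card_image_le) (Finset.card_image_le)
      have hc2 : (Finset.univ \ Astar).card = n - Astar.card := by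
        rw [Finset.card_sdiff_of_subset (Finset.subset_univ Astar), Finset.card_univ]
      have hc3 : Astar.card ≤ n := by
        rw [hn]
        exact le_trans (Finset.card_le_card (Finset.subset_univ Astar)) (le_of_eq Finset.card_univ)
      have hc4 : NA.card + 1 ≤ Astar.card := by omega
      omega
    -- contradiction with minimality of cw
    have : n ≤ (ground T).card := hWlb _ ⟨T, hTrepr, rfl, hTht⟩
    omega
  -- Hall's marriage theorem gives an injective system of representatives
  have hHall' : ∀ A : Finset α, A.card ≤ (@Finset.biUnion α ℕ instDecidableEqNat A S₀).card := by
    intro A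
    have hEq : (@Finset.biUnion α ℕ instDecidableEqNat A S₀) = A.biUnion S₀ := by
      apply Finset.ext
      intro g
      simp only [Finset.mem_biUnion]
    rw [hEq]
    exact hHall A
  obtain ⟨σ, hσinj, hσmem⟩ :=
    (Finset.all_card_le_biUnion_card_iff_exists_injective S₀).1 hHall'
  have hB : Finset.univ.sup (fun x : α => (downSet x).card) ≤ chHeight α := by
    apply Finset.sup_le
    intro x _
    have h1 : (downSet x).card ≤ (S₀ x).card := by
      apply Finset.card_le_card_of_injOn σ
      · intro u hu
        exact hmono ((hmemdown x u).1 hu) (hσmem u)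
      · exact hσinj.injOn
    exact le_trans h1 (hht x)
  exact le_antisymm hA hB
end
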